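/- Let f be a character on X, let N be a rooted binary level-k phylogenetic network on X, and let S and S' be embeddings of two phylogenetic X-trees displayed by N such that PS_sw(f,N)=PS(f,S'). Then PS(f,S) ≤ PS(f,S') + k·b(f,N,S'). -/

import Mathlib

noncomputable section
attribute [local instance] Classical.propDecidable

/-! ### Directed graphs -/

structure Dgraph (V : Type) where
  verts : Finset V
  edges : Finset (V × V)
  edges_sub : ∀ e ∈ edges, e.1 ∈ verts ∧ e.2 ∈ verts

namespace Dgraph

variable {V : Type}

def edgeRel (G : Dgraph V) (u v : V) : Prop := (u, v) ∈ G.edges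

def inDeg (G : Dgraph V) (v : V) : ℕ := (G.edges.filter (fun e => e.2 = v)).card

def outDeg (G : Dgraph V) (v : V) : ℕ := (G.edges.filter (fun e => e.1 = v)).card

def Reaches (G : Dgraph V) (u v : V) : Prop := Relation.ReflTransGen G.edgeRel u v

def Acyclic (G : Dgraph V) : Prop := ∀ u v, G.edgeRel u v → ¬ G.Reaches v u

def leaves (G : Dgraph V) : Finset V := G.verts.filter (fun v => G.outDeg v = 0)

def IsSubgraph (H G : Dgraph V) : Prop := H.verts ⊆ G.verts ∧ H.edges ⊆ G.edges

def adj (G : Dgraph V) (u v : V) : Prop := (u, v) ∈ G.edges ∨ (v, u) ∈ G.edges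

def Connected (G : Dgraph V) : Prop :=
  ∀ u ∈ G.verts, ∀ v ∈ G.verts, Relation.ReflTransGen G.adj u v

def deleteVert (G : Dgraph V) (x : V) : Dgraph V where
  verts := G.verts.erase x
  edges := G.edges.filter (fun e => e.1 ≠ x ∧ e.2 ≠ x)
  edges_sub := by
    intro e he
    simp only [Finset.mem_filter] at he
    obtain ⟨he1, hx1, hx2⟩ := he
    exact ⟨Finset.mem_erase.mpr ⟨hx1, (G.edges_sub e he1).1⟩,
           Finset.mem_erase.mpr ⟨hx2, (G.edges_sub e he1).2⟩⟩

/-- A graph is biconnected if it is connected and cannot be disconnected by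
deleting exactly one of its vertices. -/
def Biconnected (G : Dgraph V) : Prop :=
  G.Connected ∧ ∀ x ∈ G.verts, (G.deleteVert x).Connected

/-- A biconnected component: a maximal biconnected subgraph. -/
def IsBicomp (G H : Dgraph V) : Prop :=
  H.IsSubgraph G ∧ H.Biconnected ∧
  ∀ H' : Dgraph V, H'.IsSubgraph G → H'.Biconnected → H.IsSubgraph H' → H' = H

/-- One subdivision step: replace an edge `(u,w)` by `(u,v)`, `(v,w)` for a new vertex `v`. -/
def SubdivStep (G G' : Dgraph V) : Prop :=
  ∃ u w v, (u, w) ∈ G.edges ∧ v ∉ G.verts ∧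
    G'.verts = insert v G.verts ∧
    G'.edges = insert (u, v) (insert (v, w) (G.edges.erase (u, w)))

/-- `S.IsSubdivisionOf G` : `S` can be obtained from `G` by repeatedly subdividing edges
(`G` is a subdivision of itself). -/
def IsSubdivisionOf (S G : Dgraph V) : Prop := Relation.ReflTransGen SubdivStep G S

end Dgraph

/-! ### Rooted binary phylogenetic networks -/

structure PhyloNet (V : Type) (X : Finset V) where
  G : Dgraph V
  root : V
  root_mem : root ∈ G.verts
  root_inDeg : G.inDeg root = 0
  root_outDeg : G.outDeg root = 1
  acyclic : G.Acyclic
  reach : ∀ v ∈ G.verts, G.Reaches root v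
  degrees : ∀ v ∈ G.verts, v ≠ root →
      (G.inDeg v = 1 ∧ G.outDeg v = 2) ∨ (G.inDeg v = 2 ∧ G.outDeg v = 1) ∨
      (G.inDeg v = 1 ∧ G.outDeg v = 0)
  leaves_eq : G.leaves = X
  Xnonempty : X.Nonempty

namespace PhyloNet

variable {V : Type} {X : Finset V}

def IsRetic (N : PhyloNet V X) (v : V) : Prop := N.G.inDeg v = 2

/-- A rooted binary phylogenetic `X`-tree: a network with no reticulations. -/
def IsTreeNet (N : PhyloNet V X) : Prop := ∀ v ∈ N.G.verts, N.G.inDeg v ≤ 1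

/-- `S` is an embedding of `T` in `N`: a subgraph of `N` containing the root of `N`
that is a subdivision of `T`. -/
def IsEmbedding (N : PhyloNet V X) (T : PhyloNet V X) (S : Dgraph V) : Prop :=
  S.IsSubgraph N.G ∧ N.root ∈ S.verts ∧ S.IsSubdivisionOf T.G

/-- `T` is displayed by `N`. -/
def Displays (N T : PhyloNet V X) : Prop :=
  T.IsTreeNet ∧ ∃ S : Dgraph V, N.IsEmbedding T S

/-- A blob of `N`: a biconnected component with at least one reticulation. -/
def IsBlob (N : PhyloNet V X) (B : Dgraph V) : Prop :=
  Dgraph.IsBicomp N.G B ∧ ∃ v ∈ B.verts, N.IsRetic v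

/-- `N` is level-`k`: every biconnected component has at most `k` reticulations. -/
def IsLevel (N : PhyloNet V X) (k : ℕ) : Prop :=
  ∀ H : Dgraph V, Dgraph.IsBicomp N.G H →
    (H.verts.filter (fun v => N.IsRetic v)).card ≤ k

def numRetic (N : PhyloNet V X) : ℕ := (N.G.verts.filter (fun v => N.IsRetic v)).card

/-- Children of a blob `B`: vertices outside `B` that are children of vertices of `B`. -/
def blobChildren (N : PhyloNet V X) (B : Dgraph V) : Finset V :=
  N.G.verts.filter (fun v => v ∉ B.verts ∧ ∃ u ∈ B.verts, (u, v) ∈ N.G.edges)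

/-- Cluster of a vertex: its set of descendant leaves. -/
def cl (N : PhyloNet V X) (v : V) : Finset V := X.filter (fun x => N.G.Reaches v x)

end PhyloNet

/-- Source of a blob: its unique vertex of in-degree zero and out-degree two within the blob. -/
def IsSource {V : Type} (B : Dgraph V) (s : V) : Prop :=
  s ∈ B.verts ∧ B.inDeg s = 0 ∧ B.outDeg s = 2

/-! ### Characters and parsimony -/

/-- A character on `X`: a function that is surjective from `X` onto the set `C` of states. -/
def IsCharacter {V C : Type} (X : Finset V) (f : V → C) : Prop :=
  ∀ c : C, ∃ x ∈ X, f x = c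

/-- An extension of a character `f` (agrees with `f` on the leaves `X`). -/
def IsExtension {V C : Type} (X : Finset V) (f F : V → C) : Prop :=
  ∀ x ∈ X, F x = f x

/-- Changing number of an assignment `F` on a digraph. -/
def ch {V C : Type} (F : V → C) (G : Dgraph V) : ℕ :=
  (G.edges.filter (fun e => F e.1 ≠ F e.2)).card

/-- Parsimony score of `f` on `G` (leaves `X`). -/
def PS {V C : Type} (X : Finset V) (f : V → C) (G : Dgraph V) : ℕ :=
  sInf {n | ∃ F : V → C, IsExtension X f F ∧ ch F G = n}

/-- Softwired parsimony score of a single character on a network. -/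
def PSsw {V C : Type} {X : Finset V} (N : PhyloNet V X) (f : V → C) : ℕ :=
  sInf {n | ∃ T : PhyloNet V X, N.Displays T ∧ PS X f T.G = n}

/-! ### Switchings -/

def reticEdges {V : Type} {X : Finset V} (N : PhyloNet V X) : Finset (V × V) :=
  N.G.edges.filter (fun e => N.G.inDeg e.2 = 2)

def IsSwitching {V : Type} {X : Finset V} (N : PhyloNet V X) (R : Finset (V × V)) : Prop :=
  R ⊆ reticEdges N ∧
  ∀ v ∈ N.G.verts, N.IsRetic v → (R.filter (fun e => e.2 = v)).card = 1

def switchGraph {V : Type} {X : Finset V} (N : PhyloNet V X) (R : Finset (V × V)) : Dgraph V where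
  verts := N.G.verts
  edges := N.G.edges \ (reticEdges N \ R)
  edges_sub := by
    intro e he
    exact N.G.edges_sub e (Finset.mem_sdiff.mp he).1

/-- Suppressing a vertex of in-degree one and out-degree one. -/
def SuppressStep {V : Type} (G G' : Dgraph V) : Prop :=
  ∃ u v w, (u, v) ∈ G.edges ∧ (v, w) ∈ G.edges ∧ G.inDeg v = 1 ∧ G.outDeg v = 1 ∧
    u ≠ v ∧ w ≠ v ∧
    G'.verts = G.verts.erase v ∧
    G'.edges = insert (u, w) ((G.edges.erase (u, v)).erase (v, w))

/-- Deleting a vertex of out-degree zero that is not a leaf in `X`. -/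
def DeleteLeafStep {V : Type} (X : Finset V) (G G' : Dgraph V) : Prop :=
  ∃ v ∈ G.verts, v ∉ X ∧ G.outDeg v = 0 ∧
    G'.verts = G.verts.erase v ∧
    G'.edges = G.edges.filter (fun e => e.2 ≠ v)

def CleanupStep {V : Type} (X : Finset V) (G G' : Dgraph V) : Prop :=
  SuppressStep G G' ∨ DeleteLeafStep X G G'

/-- The switching `R` yields the phylogenetic tree `T`. -/
def Yields {V : Type} {X : Finset V} (N : PhyloNet V X) (R : Finset (V × V))
    (T : PhyloNet V X) : Prop :=
  T.IsTreeNet ∧ Relation.ReflTransGen (CleanupStep X) (switchGraph N R) T.G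

/-- Switching distance `h(N) - |R ∩ R'|`. -/
def switchDist {V : Type} {X : Finset V} (N : PhyloNet V X) (R R' : Finset (V × V)) : ℕ :=
  N.numRetic - (R ∩ R').card

/-! ### rSPR -/

def relPow {α : Type} (r : α → α → Prop) : ℕ → α → α → Prop
  | 0, a, b => a = b
  | n + 1, a, b => ∃ c, r a c ∧ relPow r n c b

/-- A single rooted subtree prune and regraft operation. -/
def rSPRStep {V : Type} {X : Finset V} (T T' : PhyloNet V X) : Prop :=
  ∃ u v p c a b u',
    (u, v) ∈ T.G.edges ∧ u ≠ T.root ∧ v ≠ T.root ∧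
    (p, u) ∈ T.G.edges ∧ (u, c) ∈ T.G.edges ∧ c ≠ v ∧
    (a, b) ∈ insert (p, c) (((T.G.edges.erase (u, v)).erase (p, u)).erase (u, c)) ∧
    ¬ T.G.Reaches v a ∧ ¬ T.G.Reaches v b ∧
    u' ∉ T.G.verts.erase u ∧
    T'.root = T.root ∧
    T'.G.verts = insert u' (T.G.verts.erase u) ∧
    T'.G.edges = insert (a, u') (insert (u', b) (insert (u', v)
      ((insert (p, c) (((T.G.edges.erase (u, v)).erase (p, u)).erase (u, c))).erase (a, b))))

/-- rSPR distance: minimum number of rSPR operations transforming `T` into `T'`. -/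
def rSPRdist {V : Type} {X : Finset V} (T T' : PhyloNet V X) : ℕ :=
  sInf {n | relPow rSPRStep n T T'}

/-! ### Root paths -/

/-- `(u,v)` is an edge of the root path of `G` (with root `r`). -/
def rootPathEdge {V : Type} (G : Dgraph V) (r u v : V) : Prop :=
  (u, v) ∈ G.edges ∧ G.outDeg u = 1 ∧
  Relation.ReflTransGen (fun a b => (a, b) ∈ G.edges ∧ G.outDeg a = 1) r u

/-- `F` has no character-state transition on any edge of the root path. -/
def NoRootPathChange {V C : Type} (G : Dgraph V) (r : V) (F : V → C) : Prop :=
  ∀ u v, rootPathEdge G r u v → F u = F v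

/-! ### Informative blobs -/

/-- `ind(F,B,S) = 0`: `F` assigns the same state to all children of the blob `B`. -/
def SameOnChildren {V C : Type} {X : Finset V} (N : PhyloNet V X) (B : Dgraph V)
    (F : V → C) : Prop :=
  ∀ a ∈ N.blobChildren B, ∀ b ∈ N.blobChildren B, F a = F b

/-- The number of blobs `B` of `N` with `ind(F,B,S) = 1`. -/
def infBlobCount {V C : Type} {X : Finset V} (N : PhyloNet V X) (F : V → C) : ℕ :=
  Set.ncard {B : Dgraph V | N.IsBlob B ∧ ¬ SameOnChildren N B F}

/-- `b(f,N,S)`: the number of informative blobs of `N` relative to `S` and `f`. -/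
def blobScore {V C : Type} {X : Finset V} (N : PhyloNet V X) (f : V → C) (S : Dgraph V) : ℕ :=
  sInf {m | ∃ F : V → C, IsExtension X f F ∧ ch F S = PS X f S ∧ infBlobCount N F = m}

/-- `F` realises `b(f,N,S)`. -/
def Realises {V C : Type} {X : Finset V} (N : PhyloNet V X) (f : V → C) (S : Dgraph V)
    (F : V → C) : Prop :=
  IsExtension X f F ∧ ch F S = PS X f S ∧ infBlobCount N F = blobScore N f S

/-- A blob `B` is non-informative relative to `S` and `f`. -/
def NonInformative {V C : Type} {X : Finset V} (N : PhyloNet V X) (B S : Dgraph V)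
    (f : V → C) : Prop :=
  ∃ F : V → C, IsExtension X f F ∧ ch F S = PS X f S ∧ SameOnChildren N B F

/-! ### Blob reduction / cluster tree pairs -/

/-- Longest-path distance from the root. -/
def distFromRoot {V : Type} {X : Finset V} (N : PhyloNet V X) (v : V) : ℕ :=
  sSup {n | relPow N.G.edgeRel n N.root v}

/-- The subgraph of `S` rooted at `s`. -/
def subAt {V : Type} (S : Dgraph V) (s : V) : Dgraph V where
  verts := insert s (S.verts.filter (fun v => S.Reaches s v))
  edges := S.edges.filter (fun e => S.Reaches s e.1)
  edges_sub := by
    intro e he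
    simp only [Finset.mem_filter] at he
    obtain ⟨he1, hr⟩ := he
    refine ⟨Finset.mem_insert.mpr (Or.inr (Finset.mem_filter.mpr ⟨(S.edges_sub e he1).1, hr⟩)),
      Finset.mem_insert.mpr (Or.inr (Finset.mem_filter.mpr ⟨(S.edges_sub e he1).2, ?_⟩))⟩
    exact hr.tail (show S.edgeRel e.1 e.2 from he1)

/-- `S(Y)`: the subtree of `S` rooted at `s` together with a new root `ρY` and edge `(ρY, s)`. -/
def clusterY {V : Type} (S : Dgraph V) (s ρY : V) : Dgraph V where
  verts := insert ρY (subAt S s).verts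
  edges := insert (ρY, s) (subAt S s).edges
  edges_sub := by
    intro e he
    rcases Finset.mem_insert.mp he with h | h
    · subst h
      exact ⟨Finset.mem_insert_self _ _,
        Finset.mem_insert.mpr (Or.inr (Finset.mem_insert_self _ _))⟩
    · have h2 := (subAt S s).edges_sub e h
      exact ⟨Finset.mem_insert.mpr (Or.inr h2.1), Finset.mem_insert.mpr (Or.inr h2.2)⟩

/-- `S(Ȳ)`: `S` with the subtree rooted at `s` replaced by a single new leaf `y`. -/
def clusterYbar {V : Type} (S : Dgraph V) (s y : V) : Dgraph V where
  verts := insert y (S.verts.filter (fun v => ¬ S.Reaches s v))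
  edges := (S.edges.filter (fun e => ¬ S.Reaches s e.1 ∧ ¬ S.Reaches s e.2)) ∪
           ((S.edges.filter (fun e => e.2 = s ∧ ¬ S.Reaches s e.1)).image (fun e => (e.1, y)))
  edges_sub := by
    intro e he
    rcases Finset.mem_union.mp he with h | h
    · simp only [Finset.mem_filter] at h
      exact ⟨Finset.mem_insert.mpr (Or.inr (Finset.mem_filter.mpr ⟨(S.edges_sub _ h.1).1, h.2.1⟩)),
        Finset.mem_insert.mpr (Or.inr (Finset.mem_filter.mpr ⟨(S.edges_sub _ h.1).2, h.2.2⟩))⟩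
    · simp only [Finset.mem_image, Finset.mem_filter] at h
      obtain ⟨a, ⟨ha, _, hnr⟩, hae⟩ := h
      constructor
      · rw [← hae]
        exact Finset.mem_insert.mpr (Or.inr (Finset.mem_filter.mpr ⟨(S.edges_sub _ ha).1, hnr⟩))
      · rw [← hae]
        exact Finset.mem_insert_self _ _

/-- A pair of cluster extensions with respect to `f`. -/
def ClusterExtPair {V C : Type} (X Y : Finset V) (y ρY : V) (f FY FYb : V → C) : Prop :=
  (∀ x ∈ Y, FY x = f x) ∧ (∀ x ∈ X \ Y, FYb x = f x) ∧ FYb y = FY ρY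

/-! ### Parental trees -/

/-- A vertex of `U*(N)`: a directed path in `N` starting at the root. -/
def UstarVert {V : Type} {X : Finset V} (N : PhyloNet V X) (p : List V) : Prop :=
  p ≠ [] ∧ p.head? = some N.root ∧ p.Chain' (fun a b => (a, b) ∈ N.G.edges)

/-- An edge of `U*(N)`: `q` extends `p` by one additional edge of `N`. -/
def UstarEdge {V : Type} {X : Finset V} (N : PhyloNet V X) (p q : List V) : Prop :=
  UstarVert N p ∧ UstarVert N q ∧ ∃ w, q = p ++ [w]

/-- `T` is a parental tree of `N`: obtained from a subgraph of `U*(N)` by suppressing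
in-degree-one out-degree-one vertices; its leaves are labelled bijectively by `X`
via the endpoint of the corresponding path. -/
def IsParentalTree {V : Type} {X : Finset V} (N : PhyloNet V X) {L : Finset (List V)}
    (T : PhyloNet (List V) L) : Prop :=
  T.IsTreeNet ∧
  (∀ x ∈ X, ∃! p, p ∈ L ∧ p.getLast? = some x) ∧
  (∀ p ∈ L, ∃ x ∈ X, p.getLast? = some x) ∧
  ∃ H : Dgraph (List V),
    (∀ p ∈ H.verts, UstarVert N p) ∧
    (∀ e ∈ H.edges, UstarEdge N e.1 e.2) ∧
    Relation.ReflTransGen SuppressStep H T.G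

/-- Parsimony score of a character `f` on a tree whose leaves are labelled by
elements of `X` via the last vertex of the corresponding path. -/
def PSlab {V C : Type} (L : Finset (List V)) (f : V → C) (G : Dgraph (List V)) : ℕ :=
  sInf {n | ∃ F : List V → C,
    (∀ p ∈ L, ∀ x, p.getLast? = some x → F p = f x) ∧ ch F G = n}

/-- Parental parsimony score. -/
def PSpa {V C : Type} {X : Finset V} (N : PhyloNet V X) (f : V → C) : ℕ :=
  sInf {n | ∃ (L : Finset (List V)) (T : PhyloNet (List V) L),
    IsParentalTree N T ∧ PSlab L f T.G = n}

/-! ### Undirected graphs, semi-directed networks -/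

structure UGraph (V : Type) where
  verts : Finset V
  edges : Finset (Sym2 V)
  edges_sub : ∀ e ∈ edges, ∀ v ∈ e, v ∈ verts
  no_loops : ∀ e ∈ edges, ¬ e.IsDiag

namespace UGraph

variable {V : Type}

def adj (G : UGraph V) (u v : V) : Prop := s(u, v) ∈ G.edges

def degree (G : UGraph V) (v : V) : ℕ := (G.edges.filter (fun e => v ∈ e)).card

def Connected (G : UGraph V) : Prop :=
  ∀ u ∈ G.verts, ∀ v ∈ G.verts, Relation.ReflTransGen G.adj u v

end UGraph

/-- An unrooted binary phylogenetic `X`-tree: a connected undirected acyclic graph with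
leaf set `X` whose inner vertices all have degree three. -/
structure UTree (V : Type) (X : Finset V) where
  g : UGraph V
  connected : g.Connected
  card_eq : g.verts.card = g.edges.card + 1
  leaves_eq : g.verts.filter (fun v => g.degree v = 1) = X
  degree_cases : ∀ v ∈ g.verts, g.degree v = 1 ∨ g.degree v = 3

def USubdivStep {V : Type} (G G' : UGraph V) : Prop :=
  ∃ u w v, s(u, w) ∈ G.edges ∧ v ∉ G.verts ∧
    G'.verts = insert v G.verts ∧
    G'.edges = insert s(u, v) (insert s(v, w) (G.edges.erase s(u, w)))

def IsUSubdivisionOf {V : Type} (S G : UGraph V) : Prop :=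
  Relation.ReflTransGen USubdivStep G S

/-- A binary semi-directed network: directed (reticulation) edges and undirected edges. -/
structure SemiDir (V : Type) where
  verts : Finset V
  dirE : Finset (V × V)
  undirE : Finset (Sym2 V)
  dir_sub : ∀ e ∈ dirE, e.1 ∈ verts ∧ e.2 ∈ verts
  undir_sub : ∀ e ∈ undirE, ∀ v ∈ e, v ∈ verts
  dir_noloop : ∀ e ∈ dirE, e.1 ≠ e.2
  undir_noloop : ∀ e ∈ undirE, ¬ e.IsDiag

namespace SemiDir

variable {V : Type}

/-- The underlying undirected graph. -/
def und (Ns : SemiDir V) : UGraph V where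
  verts := Ns.verts
  edges := Ns.undirE ∪ Ns.dirE.image (fun e => s(e.1, e.2))
  edges_sub := by
    intro e he v hv
    rcases Finset.mem_union.mp he with h | h
    · exact Ns.undir_sub e h v hv
    · obtain ⟨a, ha, hae⟩ := Finset.mem_image.mp h
      rw [← hae] at hv
      rcases Sym2.mem_iff.mp hv with h1 | h1
      · rw [h1]; exact (Ns.dir_sub a ha).1
      · rw [h1]; exact (Ns.dir_sub a ha).2
  no_loops := by
    intro e he
    rcases Finset.mem_union.mp he with h | h
    · exact Ns.undir_noloop e h
    · obtain ⟨a, ha, hae⟩ := Finset.mem_image.mp h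
      rw [← hae]
      simp only [Sym2.isDiag_iff_proj_eq]
      exact Ns.dir_noloop a ha

def isRetic (Ns : SemiDir V) (v : V) : Prop :=
  (Ns.dirE.filter (fun e => e.2 = v)).card = 2

/-- An unrooted phylogenetic `X`-tree is displayed by a semi-directed network. -/
def Displays {X : Finset V} (Ns : SemiDir V) (Tu : UTree V X) : Prop :=
  ∃ S : SemiDir V, S.verts ⊆ Ns.verts ∧ S.dirE ⊆ Ns.dirE ∧ S.undirE ⊆ Ns.undirE ∧
    (∀ v : V, Ns.isRetic v → (S.dirE.filter (fun e => e.2 = v)).card ≤ 1) ∧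
    IsUSubdivisionOf S.und Tu.g

end SemiDir

/-- `Nr` is a rooted partner of `Ns`: `Ns` is obtained from `Nr` by deleting the root,
suppressing the child of the root, and omitting the direction of every
non-reticulation edge. -/
def RootedPartner {V : Type} {X : Finset V} (Nr : PhyloNet V X) (Ns : SemiDir V) : Prop :=
  ∃ v w w', (Nr.root, v) ∈ Nr.G.edges ∧ (v, w) ∈ Nr.G.edges ∧ (v, w') ∈ Nr.G.edges ∧ w ≠ w' ∧
    Ns.verts = (Nr.G.verts.erase Nr.root).erase v ∧
    Ns.dirE = Nr.G.edges.filter (fun e => Nr.G.inDeg e.2 = 2 ∧ e.1 ≠ v) ∧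
    Ns.undirE = insert s(w, w')
      ((Nr.G.edges.filter (fun e => Nr.G.inDeg e.2 ≠ 2 ∧ e.1 ≠ Nr.root ∧ e.1 ≠ v)).image
        (fun e => s(e.1, e.2)))

/-- `Tu` is obtained from the rooted tree `T` by deleting the root and suppressing
its child. -/
def UnrootOf {V : Type} {X : Finset V} (T : PhyloNet V X) (Tu : UTree V X) : Prop :=
  ∃ v w w', (T.root, v) ∈ T.G.edges ∧ (v, w) ∈ T.G.edges ∧ (v, w') ∈ T.G.edges ∧ w ≠ w' ∧
    Tu.g.verts = (T.G.verts.erase T.root).erase v ∧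
    Tu.g.edges = insert s(w, w')
      ((T.G.edges.filter (fun e => e.1 ≠ T.root ∧ e.1 ≠ v)).image (fun e => s(e.1, e.2)))

/-- Changing number on an undirected graph. -/
def chU {V C : Type} (F : V → C) (G : UGraph V) : ℕ :=
  (G.edges.filter (fun e => Sym2.lift ⟨fun a b => F a ≠ F b, fun a b => propext ne_comm⟩ e)).card

/-- Parsimony score on an undirected graph with leaf set `X`. -/
def PSU {V C : Type} (X : Finset V) (f : V → C) (G : UGraph V) : ℕ :=
  sInf {n | ∃ F : V → C, IsExtension X f F ∧ chU F G = n}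

/-- Softwired parsimony score of a character on a semi-directed network. -/
def PSswU {V C : Type} (X : Finset V) (Ns : SemiDir V) (f : V → C) : ℕ :=
  sInf {n | ∃ Tu : UTree V X, Ns.Displays Tu ∧ PSU X f Tu.g = n}


/-!
Take an extension `F` of `f` that is optimal on `S'` and has the fewest informative blobs, and
extend it from `S'` to all of `N`. Call a region a biconnected component containing a cycle;
every edge of `N` outside `S'` lies in one, regions are vertex-disjoint (the network is binary),
and an Euler count shows that a region `B` has exactly `r(B) ≤ k` more edges outside `S'` than
vertices outside `S'`, `r(B)` its number of reticulations. In a region on whose children `F` is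
constant, give every vertex that constant; elsewhere let a vertex outside `S'` copy the state of
a chosen child. Then edges outside `S'` change state only in informative regions, at most `r(B)`
of them in `B`. Edges of `S'` change state only where `F` does, or when entering a
non-informative region with a state different from that of its children; each such entry is paid
for by a change of `F` on an edge of `S'` inside that region, found by walking down `S'`. So the
extension changes on at most `PS(f,S') + k·b(f,N,S')` edges of `N`, hence of `S`.
-/

open Finset Relation

namespace Dgraph

variable {V : Type}

theorem ext {G H : Dgraph V} (hv : G.verts = H.verts) (he : G.edges = H.edges) : G = H := by
  cases G; cases H; simp_all

theorem IsSubgraph.refl (G : Dgraph V) : G.IsSubgraph G := ⟨subset_rfl, subset_rfl⟩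

theorem IsSubgraph.trans {G H K : Dgraph V} (h₁ : G.IsSubgraph H) (h₂ : H.IsSubgraph K) :
    G.IsSubgraph K :=
  ⟨h₁.1.trans h₂.1, h₁.2.trans h₂.2⟩

theorem finite_setOf_isSubgraph (G : Dgraph V) : {H : Dgraph V | H.IsSubgraph G}.Finite := by
  refine Set.Finite.of_finite_image (f := fun H => (H.verts, H.edges)) ?_
    fun H _ H' _ h => ext (congrArg Prod.fst h) (congrArg Prod.snd h)
  refine (G.verts.powerset ×ˢ G.edges.powerset).finite_toSet.subset ?_
  rintro _ ⟨H, hH, rfl⟩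
  simpa using (show H.verts ⊆ G.verts ∧ H.edges ⊆ G.edges from hH)

theorem inDeg_mono {G H : Dgraph V} (h : G.edges ⊆ H.edges) (v : V) : G.inDeg v ≤ H.inDeg v :=
  card_le_card (filter_subset_filter _ h)

theorem inDeg_eq_zero_of_notMem {G : Dgraph V} {v : V} (hv : v ∉ G.verts) : G.inDeg v = 0 :=
  card_eq_zero.mpr <| filter_eq_empty_iff.mpr fun e he h => hv (h ▸ (G.edges_sub e he).2)

theorem outDeg_eq_zero_of_notMem {G : Dgraph V} {v : V} (hv : v ∉ G.verts) : G.outDeg v = 0 :=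
  card_eq_zero.mpr <| filter_eq_empty_iff.mpr fun e he h => hv (h ▸ (G.edges_sub e he).1)

theorem exists_edge_of_inDeg_ne_zero {G : Dgraph V} {v : V} (h : G.inDeg v ≠ 0) :
    ∃ u, (u, v) ∈ G.edges := by
  obtain ⟨e, he⟩ := card_ne_zero.mp h
  obtain ⟨hmem, rfl⟩ := mem_filter.mp he
  exact ⟨e.1, hmem⟩

theorem exists_edge_of_outDeg_ne_zero {G : Dgraph V} {v : V} (h : G.outDeg v ≠ 0) :
    ∃ w, (v, w) ∈ G.edges := by
  obtain ⟨e, he⟩ := card_ne_zero.mp h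
  obtain ⟨hmem, rfl⟩ := mem_filter.mp he
  exact ⟨e.2, hmem⟩

theorem card_edges_eq_sum_inDeg (G : Dgraph V) : #G.edges = ∑ v ∈ G.verts, G.inDeg v :=
  card_eq_sum_card_fiberwise fun e he => (G.edges_sub e he).2

theorem Reaches.mono {G H : Dgraph V} (h : G.edges ⊆ H.edges) {u v : V} (huv : G.Reaches u v) :
    H.Reaches u v :=
  ReflTransGen.mono (r := G.edgeRel) (p := H.edgeRel) (fun _ _ hab => h hab) _ _ huv

theorem Reaches.reflTransGen_adj {G : Dgraph V} {u v : V} (h : G.Reaches u v) :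
    ReflTransGen G.adj u v :=
  ReflTransGen.mono (r := G.edgeRel) (p := G.adj) (fun _ _ hab => Or.inl hab) _ _ h

theorem inDeg_ne_zero_of_reaches {G : Dgraph V} {u v : V} (h : G.Reaches u v) (hne : u ≠ v) :
    G.inDeg v ≠ 0 := by
  rcases h.cases_tail with rfl | ⟨c, -, hcv⟩
  · exact absurd rfl hne
  · exact card_ne_zero.mpr ⟨(c, v), mem_filter.mpr ⟨hcv, rfl⟩⟩

def deleteEdge (G : Dgraph V) (e : V × V) : Dgraph V where
  verts := G.verts
  edges := G.edges.erase e
  edges_sub d hd := G.edges_sub d (mem_of_mem_erase hd)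

theorem Reaches.deleteEdge_or {G : Dgraph V} (e : V × V) {a b : V} (h : G.Reaches a b) :
    (G.deleteEdge e).Reaches a b ∨ (G.Reaches a e.1 ∧ G.Reaches e.2 b) := by
  induction h with
  | refl => exact Or.inl .refl
  | @tail m c _ hmc ih =>
    rcases ih with ih | ⟨h₁, h₂⟩
    · by_cases hce : (m, c) = e
      · subst hce
        exact Or.inr ⟨ih.mono (erase_subset _ _), .refl⟩
      · exact Or.inl (ih.tail (mem_erase.mpr ⟨hce, hmc⟩))
    · exact Or.inr ⟨h₁, h₂.tail hmc⟩

def degree (G : Dgraph V) (v : V) : ℕ := #(G.edges.filter fun e => e.1 = v ∨ e.2 = v)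

theorem degree_mono {G H : Dgraph V} (h : G.edges ⊆ H.edges) (v : V) :
    G.degree v ≤ H.degree v :=
  card_le_card (filter_subset_filter _ h)

theorem degree_le_inDeg_add_outDeg (G : Dgraph V) (v : V) :
    G.degree v ≤ G.inDeg v + G.outDeg v := by
  refine (card_le_card fun e he => ?_).trans (card_union_le _ _)
  obtain ⟨he, h | h⟩ := mem_filter.mp he
  · exact mem_union_right _ (mem_filter.mpr ⟨he, h⟩)
  · exact mem_union_left _ (mem_filter.mpr ⟨he, h⟩)

end Dgraph

namespace PhyloNet

variable {V : Type} {X : Finset V}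

theorem not_reaches_of_edge (N : PhyloNet V X) {u v : V} (h : (u, v) ∈ N.G.edges) :
    ¬ N.G.Reaches v u :=
  N.acyclic u v h

theorem ne_of_edge (N : PhyloNet V X) {u v : V} (h : (u, v) ∈ N.G.edges) : u ≠ v := by
  rintro rfl; exact N.not_reaches_of_edge h .refl

theorem inDeg_eq (N : PhyloNet V X) {v : V} (hv : v ∈ N.G.verts) (hr : v ≠ N.root) :
    N.G.inDeg v = if N.IsRetic v then 2 else 1 := by
  unfold IsRetic
  rcases N.degrees v hv hr with ⟨h, _⟩ | ⟨h, _⟩ | ⟨h, _⟩ <;> simp [h]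

theorem isRetic_of_two_le_inDeg (N : PhyloNet V X) {v : V} (hv : v ∈ N.G.verts)
    (h : 2 ≤ N.G.inDeg v) : N.IsRetic v := by
  by_cases hr : v = N.root
  · rw [hr, N.root_inDeg] at h; omega
  · rw [N.inDeg_eq hv hr] at h; split_ifs at h with hret <;> first | exact hret | omega

theorem exists_edge_of_notMem (N : PhyloNet V X) {v : V} (hv : v ∈ N.G.verts) (hvX : v ∉ X) :
    ∃ w, (v, w) ∈ N.G.edges :=
  Dgraph.exists_edge_of_outDeg_ne_zero fun h => hvX (N.leaves_eq ▸ mem_filter.mpr ⟨hv, h⟩)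

theorem degree_le_three (N : PhyloNet V X) (v : V) : N.G.degree v ≤ 3 := by
  refine (N.G.degree_le_inDeg_add_outDeg v).trans ?_
  by_cases hv : v ∈ N.G.verts
  · by_cases hr : v = N.root
    · subst hr; rw [N.root_inDeg, N.root_outDeg]; omega
    · rcases N.degrees v hv hr with ⟨h₁, h₂⟩ | ⟨h₁, h₂⟩ | ⟨h₁, h₂⟩ <;> omega
  · rw [Dgraph.inDeg_eq_zero_of_notMem hv, Dgraph.outDeg_eq_zero_of_notMem hv]; omega

theorem degree_root_le_one (N : PhyloNet V X) : N.G.degree N.root ≤ 1 := by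
  have := N.G.degree_le_inDeg_add_outDeg N.root
  rw [N.root_inDeg, N.root_outDeg] at this; omega

theorem degree_le_one_of_mem (N : PhyloNet V X) {x : V} (hx : x ∈ X) : N.G.degree x ≤ 1 := by
  have hleaf := N.leaves_eq ▸ hx
  obtain ⟨hxV, hout⟩ := mem_filter.mp hleaf
  have hxr : x ≠ N.root := by rintro rfl; rw [N.root_outDeg] at hout; omega
  have := N.G.degree_le_inDeg_add_outDeg x
  rcases N.degrees x hxV hxr with ⟨h₁, h₂⟩ | ⟨h₁, h₂⟩ | ⟨h₁, h₂⟩ <;> omega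

theorem card_edges_add_one (N : PhyloNet V X) : #N.G.edges + 1 = #N.G.verts + N.numRetic := by
  have hsum : #N.G.edges = ∑ v ∈ N.G.verts.erase N.root, (1 + if N.IsRetic v then 1 else 0) := by
    rw [N.G.card_edges_eq_sum_inDeg, ← add_sum_erase _ _ N.root_mem, N.root_inDeg, zero_add]
    refine sum_congr rfl fun v hv => ?_
    rw [N.inDeg_eq (mem_of_mem_erase hv) (ne_of_mem_erase hv)]
    split_ifs <;> rfl
  have hroot : ¬ N.IsRetic N.root := by simp [IsRetic, N.root_inDeg]
  have hretic : ∑ v ∈ N.G.verts.erase N.root, (if N.IsRetic v then 1 else 0) = N.numRetic := by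
    rw [← card_filter, numRetic, filter_erase, erase_eq_of_notMem (by simp [hroot])]
  rw [hsum, sum_add_distrib, hretic, sum_const, smul_eq_mul, mul_one,
    card_erase_of_mem N.root_mem]
  have := card_pos.mpr ⟨_, N.root_mem⟩
  omega

def numDesc (N : PhyloNet V X) (v : V) : ℕ := #(N.G.verts.filter (N.G.Reaches v ·))

theorem numDesc_lt (N : PhyloNet V X) {v w : V} (h : (v, w) ∈ N.G.edges) :
    N.numDesc w < N.numDesc v := by
  refine card_lt_card ⟨fun x hx => ?_, fun hsub => ?_⟩
  · obtain ⟨hx, hwx⟩ := mem_filter.mp hx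
    exact mem_filter.mpr ⟨hx, ReflTransGen.head h hwx⟩
  · have hv := hsub (mem_filter.mpr ⟨(N.G.edges_sub _ h).1, .refl⟩)
    exact N.not_reaches_of_edge h (mem_filter.mp hv).2

theorem exists_reaches_mem (N : PhyloNet V X) {v : V} (hv : v ∈ N.G.verts) :
    ∃ x ∈ X, N.G.Reaches v x := by
  induction hn : N.numDesc v using Nat.strong_induction_on generalizing v with
  | _ n ih =>
    by_cases hvX : v ∈ X
    · exact ⟨v, hvX, .refl⟩
    · obtain ⟨w, hw⟩ := N.exists_edge_of_notMem hv hvX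
      obtain ⟨x, hx, hwx⟩ := ih _ (hn ▸ N.numDesc_lt hw) (N.G.edges_sub _ hw).2 rfl
      exact ⟨x, hx, ReflTransGen.head hw hwx⟩

end PhyloNet

/-! ### Rooted `X`-trees -/

namespace Dgraph

variable {V : Type}

theorem SubdivStep.card_filter_add {G G' : Dgraph V} {u w v : V} (huw : (u, w) ∈ G.edges)
    (hv : v ∉ G.verts) (hE : G'.edges = insert (u, v) (insert (v, w) (G.edges.erase (u, w))))
    (p : V × V → Prop) :
    #(G'.edges.filter p) + (if p (u, w) then 1 else 0) =
      #(G.edges.filter p) + (if p (u, v) then 1 else 0) + (if p (v, w) then 1 else 0) := by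
  have hnew : ∀ d ∈ G.edges, d.1 ≠ v ∧ d.2 ≠ v := fun d hd =>
    ⟨fun h => hv (h ▸ (G.edges_sub d hd).1), fun h => hv (h ▸ (G.edges_sub d hd).2)⟩
  have hvw : (v, w) ∉ G.edges.erase (u, w) := fun h => (hnew _ (mem_of_mem_erase h)).1 rfl
  have huv : (u, v) ∉ insert (v, w) (G.edges.erase (u, w)) := by
    rw [mem_insert, not_or]
    exact ⟨fun h => (hnew _ huw).1 (congrArg Prod.fst h),
      fun h => (hnew _ (mem_of_mem_erase h)).2 rfl⟩
  rw [hE, card_filter, card_filter, sum_insert huv, sum_insert hvw, ← sum_erase_add _ _ huw]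
  ring

structure IsXTree (X : Finset V) (r : V) (G : Dgraph V) : Prop where
  root_mem : r ∈ G.verts
  inDeg_le_one : ∀ v, G.inDeg v ≤ 1
  card_verts : #G.verts = #G.edges + 1
  leaves_eq : G.leaves = X
  reaches : ∀ v ∈ G.verts, G.Reaches r v

theorem IsXTree.subdivStep {X : Finset V} {r : V} {G G' : Dgraph V} (hG : G.IsXTree X r)
    (h : SubdivStep G G') : G'.IsXTree X r := by
  obtain ⟨u, w, v, huw, hv, hV, hE⟩ := h
  have hcount := SubdivStep.card_filter_add huw hv hE
  have hu : u ∈ G.verts := (G.edges_sub _ huw).1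
  have hin : ∀ x, G'.inDeg x = G.inDeg x + if v = x then 1 else 0 := fun x => by
    have := hcount (·.2 = x); simp only [inDeg] at this ⊢; split_ifs at this ⊢ <;> omega
  have hout : ∀ x, G'.outDeg x = G.outDeg x + if v = x then 1 else 0 := fun x => by
    have := hcount (·.1 = x); simp only [outDeg] at this ⊢; split_ifs at this ⊢ <;> omega
  have hlift : ∀ {a b}, G.Reaches a b → G'.Reaches a b := by
    intro a b hab
    induction hab with
    | refl => exact .refl
    | @tail m c _ hmc ih =>
      by_cases hmce : (m, c) = (u, w)
      · obtain ⟨rfl, rfl⟩ := Prod.ext_iff.mp hmce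
        exact (ih.tail (show (m, v) ∈ G'.edges by simp [hE])).tail
          (show (v, c) ∈ G'.edges by simp [hE])
      · exact ih.tail (show (m, c) ∈ G'.edges from
          hE ▸ mem_insert_of_mem (mem_insert_of_mem (mem_erase.mpr ⟨hmce, hmc⟩)))
  refine ⟨hV ▸ mem_insert_of_mem hG.root_mem, fun x => ?_, ?_, ?_, ?_⟩
  · rw [hin]
    split_ifs with hx
    · rw [← hx, inDeg_eq_zero_of_notMem hv]
    · simpa using hG.inDeg_le_one x
  · have := hcount fun _ => True
    simp only [filter_true, ↓reduceIte, Nat.add_right_cancel_iff] at this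
    rw [hV, card_insert_of_notMem hv, hG.card_verts]
    omega
  · ext x
    simp only [leaves, mem_filter, hV, mem_insert, hout, ← hG.leaves_eq]
    by_cases hx : v = x
    · subst hx; simp [hv]
    · simp [hx, Ne.symm hx]
  · intro x hx
    rw [hV, mem_insert] at hx
    rcases hx with rfl | hx
    · exact (hlift (hG.reaches u hu)).tail (show (u, x) ∈ G'.edges by simp [hE])
    · exact hlift (hG.reaches x hx)

theorem IsXTree.of_isSubdivisionOf {X : Finset V} {r : V} {G S : Dgraph V} (hG : G.IsXTree X r)
    (h : S.IsSubdivisionOf G) : S.IsXTree X r := by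
  induction h with
  | refl => exact hG
  | tail _ hstep ih => exact ih.subdivStep hstep

theorem IsXTree.subset_verts {X : Finset V} {r : V} {G : Dgraph V} (hG : G.IsXTree X r) :
    X ⊆ G.verts := by
  rw [← hG.leaves_eq]; exact filter_subset _ _

theorem IsXTree.exists_edge {X : Finset V} {r : V} {G : Dgraph V} (hG : G.IsXTree X r) {v : V}
    (hv : v ∈ G.verts) (hvX : v ∉ X) : ∃ w, (v, w) ∈ G.edges :=
  exists_edge_of_outDeg_ne_zero fun h => hvX (hG.leaves_eq ▸ mem_filter.mpr ⟨hv, h⟩)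

theorem IsXTree.eq_of_mem_edges {X : Finset V} {r : V} {G : Dgraph V} (hG : G.IsXTree X r)
    {a b c : V} (ha : (a, c) ∈ G.edges) (hb : (b, c) ∈ G.edges) : a = b :=
  congrArg Prod.fst <| card_le_one.mp (hG.inDeg_le_one c) _ (mem_filter.mpr ⟨ha, rfl⟩) _
    (mem_filter.mpr ⟨hb, rfl⟩)

variable {X : Finset V}

theorem IsXTree.of_isTreeNet {T : PhyloNet V X} (hT : T.IsTreeNet) : T.G.IsXTree X T.root := by
  have hone : ∀ v ∈ T.G.verts.erase T.root, T.G.inDeg v = 1 := fun v hv => by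
    have := T.inDeg_eq (mem_of_mem_erase hv) (ne_of_mem_erase hv)
    have := hT v (mem_of_mem_erase hv)
    split_ifs at * <;> omega
  refine ⟨T.root_mem, fun v => ?_, ?_, T.leaves_eq, T.reach⟩
  · by_cases hv : v ∈ T.G.verts
    · exact hT v hv
    · rw [inDeg_eq_zero_of_notMem hv]; omega
  · rw [card_edges_eq_sum_inDeg, ← add_sum_erase _ _ T.root_mem, T.root_inDeg, zero_add,
      sum_congr rfl hone, sum_const, smul_eq_mul, mul_one, card_erase_add_one T.root_mem]

theorem IsXTree.of_isEmbedding {N T : PhyloNet V X} {S : Dgraph V} (hT : T.IsTreeNet)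
    (hS : N.IsEmbedding T S) : S.IsXTree X N.root := by
  have hST : S.IsXTree X T.root := (IsXTree.of_isTreeNet hT).of_isSubdivisionOf hS.2.2
  have hroot : T.root = N.root := by
    by_contra hne
    refine inDeg_ne_zero_of_reaches (hST.reaches _ hS.2.1) hne ?_
    have := inDeg_mono hS.1.2 N.root
    rw [N.root_inDeg] at this; omega
  exact hroot ▸ hST

end Dgraph

/-! ### Cycles and biconnected components -/

theorem Relation.ReflTransGen.symm_of_symm {α : Type} {r : α → α → Prop}
    (hr : ∀ a b, r a b → r b a) {a b : α} (h : ReflTransGen r a b) : ReflTransGen r b a :=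
  reflTransGen_swap.mp (ReflTransGen.mono (p := Function.swap r) hr _ _ h)

theorem List.IsChain.reflTransGen_of_mem {α : Type} {r : α → α → Prop}
    (hr : ∀ a b, r a b → r b a) {l : List α} (hl : l.IsChain r) {a b : α} (ha : a ∈ l)
    (hb : b ∈ l) : ReflTransGen r a b := by
  cases l with
  | nil => simp at ha
  | cons c t =>
    have hc := List.IsChain.induction (ReflTransGen r c ·) _ hl (fun _ _ hxy hx => hx.tail hxy)
      fun _ => .refl
    exact (hc a ha).symm_of_symm hr |>.trans (hc b hb)

namespace Dgraph

variable {V : Type}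

theorem adj_symm {G : Dgraph V} {a b : V} (h : G.adj a b) : G.adj b a := h.symm

theorem adj_mono {G H : Dgraph V} (h : G.edges ⊆ H.edges) {a b : V} (hab : G.adj a b) :
    H.adj a b :=
  hab.imp (fun h' => h h') (fun h' => h h')

theorem adj_deleteVert {G : Dgraph V} {x a b : V} (hab : G.adj a b) (ha : a ≠ x) (hb : b ≠ x) :
    (G.deleteVert x).adj a b :=
  hab.imp (fun h => mem_filter.mpr ⟨h, ha, hb⟩) (fun h => mem_filter.mpr ⟨h, hb, ha⟩)

theorem adj_deleteVert_mono {G H : Dgraph V} (h : G.edges ⊆ H.edges) {x a b : V}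
    (hab : (G.deleteVert x).adj a b) : (H.deleteVert x).adj a b :=
  hab.imp (fun h' => filter_subset_filter _ h h') (fun h' => filter_subset_filter _ h h')

theorem connected_of_isChain {G : Dgraph V} {l : List V} (hl : l.IsChain G.adj)
    (hV : ∀ v ∈ G.verts, v ∈ l) : G.Connected :=
  fun _ hu _ hv => hl.reflTransGen_of_mem (fun _ _ => adj_symm) (hV _ hu) (hV _ hv)

def induce (G : Dgraph V) (s : Finset V) : Dgraph V where
  verts := s
  edges := G.edges.filter fun e => e.1 ∈ s ∧ e.2 ∈ s
  edges_sub _ he := (mem_filter.mp he).2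

/-- Deleting a vertex `x` of the cycle `l = s ++ x :: t` leaves the path `t ++ s`. -/
theorem biconnected_induce_of_cycle {G : Dgraph V} {l : List V} (hnd : l.Nodup)
    (hl : l.IsChain G.adj) (hclose : ∀ a ∈ l.getLast?, ∀ b ∈ l.head?, G.adj a b) :
    (G.induce l.toFinset).Biconnected := by
  have hind : ∀ a b, a ∈ l → b ∈ l → G.adj a b → (G.induce l.toFinset).adj a b :=
    fun a b ha hb hab =>
    hab.imp (fun h => mem_filter.mpr ⟨h, by simp [ha, hb]⟩)
      (fun h => mem_filter.mpr ⟨h, by simp [ha, hb]⟩)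
  refine ⟨connected_of_isChain (hl.imp_of_mem_imp hind) fun v hv => List.mem_toFinset.mp hv,
    fun x hx => ?_⟩
  obtain ⟨s, t, rfl⟩ := List.append_of_mem (List.mem_toFinset.mp hx)
  have hnd' := List.nodup_middle.mp hnd
  have hxst : x ∉ t ++ s := (List.nodup_cons.mp hnd').1 ∘ List.mem_append.mpr ∘ Or.symm ∘
    List.mem_append.mp
  have hchain : (t ++ s).IsChain G.adj := by
    refine List.isChain_append.mpr ⟨(List.isChain_append.mp hl).2.1.tail,
      (List.isChain_append.mp hl).1, fun a ha b hb => hclose a ?_ b ?_⟩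
    · obtain ⟨t', rfl⟩ := List.getLast?_eq_some_iff.mp ha
      rw [List.getLast?_append, ← List.cons_append, List.getLast?_append]
      simp
    · obtain ⟨s', rfl⟩ := List.head?_eq_some_iff.mp hb
      simp
  refine connected_of_isChain (hchain.imp_of_mem_imp fun a b ha hb hab => ?_) fun v hv => ?_
  · have hmem : ∀ c ∈ t ++ s, c ∈ s ++ x :: t := fun c hc => by
      rcases List.mem_append.mp hc with h | h <;> simp [h]
    exact adj_deleteVert (hind a b (hmem a ha) (hmem b hb) hab) (fun h => hxst (h ▸ ha))
      (fun h => hxst (h ▸ hb))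
  · obtain ⟨hvx, hv⟩ := mem_erase.mp hv
    have hv := List.mem_toFinset.mp hv
    simp only [List.mem_append, List.mem_cons] at hv ⊢
    tauto

theorem mem_verts_of_adj {G : Dgraph V} {a b : V} (h : G.adj a b) :
    a ∈ G.verts ∧ b ∈ G.verts := by
  rcases h with h | h
  · exact G.edges_sub _ h
  · exact (G.edges_sub _ h).symm

theorem mem_verts_of_reflTransGen {G : Dgraph V} {u v : V} (h : ReflTransGen G.adj u v)
    (hu : u ∈ G.verts) : v ∈ G.verts := by
  rcases h.cases_tail with rfl | ⟨c, -, hcv⟩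
  · exact hu
  · exact (mem_verts_of_adj hcv).2

def union (G H : Dgraph V) : Dgraph V where
  verts := G.verts ∪ H.verts
  edges := G.edges ∪ H.edges
  edges_sub e he := by
    rcases mem_union.mp he with h | h
    · exact ⟨mem_union_left _ (G.edges_sub e h).1, mem_union_left _ (G.edges_sub e h).2⟩
    · exact ⟨mem_union_right _ (H.edges_sub e h).1, mem_union_right _ (H.edges_sub e h).2⟩

theorem Biconnected.reflTransGen_deleteVert {G : Dgraph V} (hG : G.Biconnected) {x u v : V}
    (hu : u ∈ G.verts) (hv : v ∈ G.verts) (hux : u ≠ x) (hvx : v ≠ x) :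
    ReflTransGen (G.deleteVert x).adj u v := by
  by_cases hx : x ∈ G.verts
  · exact hG.2 x hx u (mem_erase.mpr ⟨hux, hu⟩) v (mem_erase.mpr ⟨hvx, hv⟩)
  · refine ReflTransGen.mono (fun a b hab => adj_deleteVert hab ?_ ?_) _ _ (hG.1 u hu v hv)
    · exact fun hax => hx (hax ▸ (mem_verts_of_adj hab).1)
    · exact fun hbx => hx (hbx ▸ (mem_verts_of_adj hab).2)

theorem Biconnected.union {G H : Dgraph V} (hG : G.Biconnected) (hH : H.Biconnected) {a b : V}
    (haG : a ∈ G.verts) (haH : a ∈ H.verts) (hbG : b ∈ G.verts) (hbH : b ∈ H.verts)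
    (hab : a ≠ b) : (G.union H).Biconnected := by
  have hGU : G.edges ⊆ (G.union H).edges := subset_union_left
  have hHU : H.edges ⊆ (G.union H).edges := subset_union_right
  refine ⟨fun u hu v hv => ?_, fun x _ u hu v hv => ?_⟩
  · have toA : ∀ w ∈ (G.union H).verts, ReflTransGen (G.union H).adj w a := fun w hw => by
      rcases mem_union.mp hw with h | h
      · exact ReflTransGen.mono (fun _ _ => adj_mono hGU) _ _ (hG.1 w h a haG)
      · exact ReflTransGen.mono (fun _ _ => adj_mono hHU) _ _ (hH.1 w h a haH)
    exact (toA u hu).trans ((toA v hv).symm_of_symm fun _ _ => adj_symm)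
  · obtain ⟨p, hpG, hpH, hpx⟩ : ∃ p, p ∈ G.verts ∧ p ∈ H.verts ∧ p ≠ x := by
      by_cases hax : a = x
      · exact ⟨b, hbG, hbH, hax ▸ hab.symm⟩
      · exact ⟨a, haG, haH, hax⟩
    have toP : ∀ w ∈ (G.union H).verts.erase x,
        ReflTransGen ((G.union H).deleteVert x).adj w p := fun w hw => by
      obtain ⟨hwx, hw⟩ := mem_erase.mp hw
      rcases mem_union.mp hw with h | h
      · exact ReflTransGen.mono (fun _ _ => adj_deleteVert_mono hGU) _ _
          (hG.reflTransGen_deleteVert h hpG hwx hpx)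
      · exact ReflTransGen.mono (fun _ _ => adj_deleteVert_mono hHU) _ _
          (hH.reflTransGen_deleteVert h hpH hwx hpx)
    exact (toP u hu).trans ((toP v hv).symm_of_symm fun _ _ => adj_symm)

theorem exists_isBicomp (G : Dgraph V) {H : Dgraph V} (hH : H.IsSubgraph G)
    (hHb : H.Biconnected) : ∃ M, G.IsBicomp M ∧ H.IsSubgraph M := by
  set s := {K : Dgraph V | K.IsSubgraph G ∧ K.Biconnected ∧ H.IsSubgraph K}
  have hs : s.Finite := G.finite_setOf_isSubgraph.subset fun K hK => hK.1
  obtain ⟨M, ⟨hMG, hMb, hHM⟩, hmax⟩ := Set.exists_max_image s (fun K => #K.verts + #K.edges) hs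
    ⟨H, hH, hHb, IsSubgraph.refl H⟩
  refine ⟨M, ⟨hMG, hMb, fun K hKG hKb hMK => ?_⟩, hHM⟩
  have hle := hmax K ⟨hKG, hKb, hHM.trans hMK⟩
  have h₁ := card_le_card hMK.1
  have h₂ := card_le_card hMK.2
  exact ext (eq_of_subset_of_card_le hMK.1 (by omega)).symm
    (eq_of_subset_of_card_le hMK.2 (by omega)).symm

theorem exists_adj_of_reflTransGen {G : Dgraph V} {u v : V} (h : ReflTransGen G.adj u v)
    (huv : u ≠ v) : ∃ c, G.adj u c := by
  rcases h.cases_head with rfl | ⟨c, hc, -⟩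
  · exact absurd rfl huv
  · exact ⟨c, hc⟩

theorem Biconnected.two_le_degree {B : Dgraph V} (hB : B.Biconnected)
    (hloop : ∀ e ∈ B.edges, e.1 ≠ e.2) (h3 : 3 ≤ #B.verts) {v : V} (hv : v ∈ B.verts) :
    2 ≤ B.degree v := by
  have hadj : ∀ {c}, B.adj v c → c ∈ B.verts ∧ c ≠ v ∧
      ((v, c) ∈ B.edges.filter (fun e => e.1 = v ∨ e.2 = v) ∨
        (c, v) ∈ B.edges.filter (fun e => e.1 = v ∨ e.2 = v)) := fun {c} h => by
    rcases h with h | h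
    · exact ⟨(B.edges_sub _ h).2, (hloop _ h).symm, Or.inl (mem_filter.mpr ⟨h, Or.inl rfl⟩)⟩
    · exact ⟨(B.edges_sub _ h).1, hloop _ h, Or.inr (mem_filter.mpr ⟨h, Or.inr rfl⟩)⟩
  obtain ⟨t₁, ht₁, ht₁v⟩ := exists_mem_ne (by omega : 1 < #B.verts) v
  obtain ⟨c₁, hc₁⟩ := exists_adj_of_reflTransGen (hB.1 v hv t₁ ht₁) ht₁v.symm
  obtain ⟨hc₁B, hc₁v, hd₁⟩ := hadj hc₁
  obtain ⟨t₂, ht₂, ht₂c⟩ := exists_mem_ne (by rw [card_erase_of_mem hv]; omega :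
    1 < #(B.verts.erase v)) c₁
  obtain ⟨ht₂v, ht₂⟩ := mem_erase.mp ht₂
  obtain ⟨c₂, hc₂⟩ := exists_adj_of_reflTransGen
    (hB.2 c₁ hc₁B v (mem_erase.mpr ⟨hc₁v.symm, hv⟩) t₂ (mem_erase.mpr ⟨ht₂c, ht₂⟩))
    ht₂v.symm
  have hc₂c₁ : c₂ ≠ c₁ := by
    rcases hc₂ with h | h
    · exact (mem_filter.mp h).2.2
    · exact (mem_filter.mp h).2.1
  obtain ⟨-, hc₂v, hd₂⟩ := hadj (adj_mono (filter_subset _ _) hc₂ : B.adj v c₂)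
  refine le_trans ?_ (card_le_card (s := {if (v, c₁) ∈ B.edges then (v, c₁) else (c₁, v),
    if (v, c₂) ∈ B.edges then (v, c₂) else (c₂, v)}) ?_)
  · rw [card_pair]
    split_ifs <;> simp [Prod.ext_iff, hc₁v, Ne.symm hc₂c₁, Ne.symm hc₂v]
  · intro d hd
    simp only [mem_insert, mem_singleton] at hd
    rcases hd with rfl | rfl <;> split_ifs with h <;> simp_all [mem_filter]

def toSimpleGraph (G : Dgraph V) : SimpleGraph V := SimpleGraph.fromRel fun a b => (a, b) ∈ G.edges

theorem toSimpleGraph_adj {G : Dgraph V} {a b : V} :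
    G.toSimpleGraph.Adj a b ↔ a ≠ b ∧ G.adj a b :=
  SimpleGraph.fromRel_adj _ _ _

theorem reachable_toSimpleGraph {G : Dgraph V} {u v : V} (h : ReflTransGen G.adj u v) :
    G.toSimpleGraph.Reachable u v := by
  induction h with
  | refl => rfl
  | @tail m c _ hmc ih =>
    by_cases hmc' : m = c
    · exact hmc' ▸ ih
    · exact ih.trans (toSimpleGraph_adj.mpr ⟨hmc', hmc⟩).reachable

theorem exists_cycle {G : Dgraph V} {e : V × V} (hne : e.1 ≠ e.2) (hrev : (e.2, e.1) ∉ G.edges)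
    (h : ReflTransGen (G.deleteEdge e).adj e.2 e.1) :
    ∃ l : List V, l.Nodup ∧ l.IsChain G.adj ∧ l.head? = some e.2 ∧ l.getLast? = some e.1 ∧
      3 ≤ l.length := by
  have hreach := reachable_toSimpleGraph h
  let p := hreach.some.bypass
  have hlen : 2 ≤ p.length := by
    by_contra hlt
    interval_cases hp : p.length
    · exact hne (SimpleGraph.Walk.eq_of_length_eq_zero hp).symm
    · obtain ⟨-, h | h⟩ := toSimpleGraph_adj.mp (SimpleGraph.Walk.adj_of_length_eq_one hp)
      · exact hrev (mem_of_mem_erase h)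
      · exact (mem_erase.mp h).1 rfl
  refine ⟨p.support, hreach.some.bypass_isPath.support_nodup,
    p.isChain_adj_support.imp fun _ _ hab => adj_mono (erase_subset _ _)
      (toSimpleGraph_adj.mp hab).2, ?_, ?_, by rw [p.length_support]; omega⟩
  · rw [← p.cons_tail_support]; rfl
  · rw [List.getLast?_eq_some_getLast p.support_ne_nil, p.getLast_support]

end Dgraph

/-! ### Regions -/

namespace PhyloNet

variable {V : Type} {X : Finset V}

/-- The biconnected components that contain a cycle. -/
def IsRegion (N : PhyloNet V X) (B : Dgraph V) : Prop := N.G.IsBicomp B ∧ 3 ≤ #B.verts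

theorem IsRegion.subgraph {N : PhyloNet V X} {B : Dgraph V} (hB : N.IsRegion B) :
    B.IsSubgraph N.G :=
  hB.1.1

theorem IsRegion.two_le_degree {N : PhyloNet V X} {B : Dgraph V} (hB : N.IsRegion B) {v : V}
    (hv : v ∈ B.verts) : 2 ≤ B.degree v :=
  hB.1.2.1.two_le_degree (fun _ he => N.ne_of_edge (hB.subgraph.2 he)) hB.2 hv

theorem exists_isRegion_of_reflTransGen (N : PhyloNet V X) {e : V × V} (he : e ∈ N.G.edges)
    (h : ReflTransGen (N.G.deleteEdge e).adj e.2 e.1) : ∃ B, N.IsRegion B ∧ e ∈ B.edges := by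
  obtain ⟨l, hnd, hl, hhead, hlast, hlen⟩ := Dgraph.exists_cycle (N.ne_of_edge he)
    (fun hrev => N.not_reaches_of_edge he (.single hrev)) h
  have hcyc := Dgraph.biconnected_induce_of_cycle hnd hl fun a ha b hb => by
    rw [hlast, Option.mem_some_iff] at ha
    rw [hhead, Option.mem_some_iff] at hb
    exact ha ▸ hb ▸ Or.inl he
  have h₁ := List.mem_of_getLast? hlast
  have h₂ := List.mem_of_mem_head? hhead
  have hsub : (N.G.induce l.toFinset).IsSubgraph N.G := by
    refine ⟨fun v hv => ?_, filter_subset _ _⟩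
    exact Dgraph.mem_verts_of_reflTransGen
      (hl.reflTransGen_of_mem (fun _ _ => Dgraph.adj_symm) h₂ (List.mem_toFinset.mp hv))
      (N.G.edges_sub e he).2
  obtain ⟨M, hM, hCM⟩ := N.G.exists_isBicomp hsub hcyc
  refine ⟨M, ⟨hM, le_trans ?_ (card_le_card hCM.1)⟩, hCM.2 (mem_filter.mpr ⟨he, ?_⟩)⟩
  · rw [Dgraph.induce, List.toFinset_card_of_nodup hnd]; exact hlen
  · exact ⟨List.mem_toFinset.mpr h₁, List.mem_toFinset.mpr h₂⟩

/-- Two regions through a vertex `v` would give `v` four incident edges unless they share an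
edge; then their union is biconnected, so both equal it by maximality. -/
theorem IsRegion.eq_of_mem {N : PhyloNet V X} {B B' : Dgraph V} (hB : N.IsRegion B)
    (hB' : N.IsRegion B') {v : V} (hv : v ∈ B.verts) (hv' : v ∈ B'.verts) : B = B' := by
  obtain ⟨d, hd, hd'⟩ : ∃ d ∈ B.edges, d ∈ B'.edges := by
    by_contra! hdisj
    have hcard := card_le_card (union_subset (filter_subset_filter _ hB.subgraph.2)
      (filter_subset_filter _ hB'.subgraph.2) : B.edges.filter (fun e => e.1 = v ∨ e.2 = v) ∪
        B'.edges.filter (fun e => e.1 = v ∨ e.2 = v) ⊆ _)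
    rw [card_union_of_disjoint (disjoint_filter_filter (disjoint_left.mpr hdisj))] at hcard
    have := hB.two_le_degree hv
    have := hB'.two_le_degree hv'
    have := N.degree_le_three v
    simp only [Dgraph.degree] at *
    omega
  have hU := hB.1.2.1.union hB'.1.2.1 (B.edges_sub d hd).1 (B'.edges_sub d hd').1
    (B.edges_sub d hd).2 (B'.edges_sub d hd').2 (N.ne_of_edge (hB.subgraph.2 hd))
  have hUN : (B.union B').IsSubgraph N.G :=
    ⟨union_subset hB.subgraph.1 hB'.subgraph.1, union_subset hB.subgraph.2 hB'.subgraph.2⟩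
  exact (hB.1.2.2 _ hUN hU ⟨subset_union_left, subset_union_left⟩).symm.trans
    (hB'.1.2.2 _ hUN hU ⟨subset_union_right, subset_union_right⟩)

theorem IsRegion.notMem_of_mem {N : PhyloNet V X} {B : Dgraph V} (hB : N.IsRegion B) {x : V}
    (hx : x ∈ X) : x ∉ B.verts := fun hxB => by
  have := (hB.two_le_degree hxB).trans (Dgraph.degree_mono hB.subgraph.2 x)
  have := N.degree_le_one_of_mem hx
  omega

theorem IsRegion.root_notMem {N : PhyloNet V X} {B : Dgraph V} (hB : N.IsRegion B) :
    N.root ∉ B.verts := fun hrB => by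
  have := (hB.two_le_degree hrB).trans (Dgraph.degree_mono hB.subgraph.2 _)
  have := N.degree_root_le_one
  omega

theorem IsRegion.exists_lowest {N : PhyloNet V X} {B : Dgraph V} (hB : N.IsRegion B) :
    ∃ v ∈ B.verts, ∀ w, (v, w) ∈ N.G.edges → w ∉ B.verts := by
  obtain ⟨v, hv, hmin⟩ := B.verts.exists_min_image N.numDesc (card_pos.mp (by have := hB.2; omega))
  exact ⟨v, hv, fun w hw hwB => (hmin w hwB).not_gt (N.numDesc_lt hw)⟩

theorem IsRegion.exists_isRetic {N : PhyloNet V X} {B : Dgraph V} (hB : N.IsRegion B) :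
    ∃ v ∈ B.verts, N.IsRetic v := by
  obtain ⟨v, hv, hlow⟩ := hB.exists_lowest
  refine ⟨v, hv, N.isRetic_of_two_le_inDeg (hB.subgraph.1 hv) ?_⟩
  refine (hB.two_le_degree hv).trans (le_trans (card_le_card fun e he => ?_)
    (Dgraph.inDeg_mono hB.subgraph.2 v))
  obtain ⟨he, h | h⟩ := mem_filter.mp he
  · exact absurd (B.edges_sub e he).2 (hlow _ (h ▸ hB.subgraph.2 he))
  · exact mem_filter.mpr ⟨he, h⟩

theorem IsRegion.blobChildren_nonempty {N : PhyloNet V X} {B : Dgraph V} (hB : N.IsRegion B) :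
    (N.blobChildren B).Nonempty := by
  obtain ⟨v, hv, hlow⟩ := hB.exists_lowest
  obtain ⟨w, hw⟩ := N.exists_edge_of_notMem (hB.subgraph.1 hv) fun hvX => hB.notMem_of_mem hvX hv
  exact ⟨w, mem_filter.mpr ⟨(N.G.edges_sub _ hw).2, hlow w hw, v, hv, hw⟩⟩

def regions (N : PhyloNet V X) : Finset (Dgraph V) :=
  (N.G.finite_setOf_isSubgraph.subset fun _ (hB : N.IsRegion _) => hB.subgraph).toFinset

theorem mem_regions {N : PhyloNet V X} {B : Dgraph V} : B ∈ N.regions ↔ N.IsRegion B :=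
  Set.Finite.mem_toFinset _

structure IsSubtree (N : PhyloNet V X) (S : Dgraph V) : Prop extends S.IsXTree X N.root where
  subgraph : S.IsSubgraph N.G

theorem IsEmbedding.isSubtree {N T : PhyloNet V X} {S : Dgraph V} (hT : T.IsTreeNet)
    (hS : N.IsEmbedding T S) : N.IsSubtree S :=
  ⟨Dgraph.IsXTree.of_isEmbedding hT hS, hS.1⟩

theorem reaches_deleteEdge_root (N : PhyloNet V X) {e : V × V} (he : e ∈ N.G.edges) :
    (N.G.deleteEdge e).Reaches N.root e.1 :=
  ((N.reach _ (N.G.edges_sub e he).1).deleteEdge_or e).resolve_right fun h =>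
    N.not_reaches_of_edge he h.2

theorem IsSubtree.exists_isRegion_of_notMem_edges {N : PhyloNet V X} {S : Dgraph V}
    (hS : N.IsSubtree S) {e : V × V} (he : e ∈ N.G.edges) (heS : e ∉ S.edges) :
    ∃ B, N.IsRegion B ∧ e ∈ B.edges := by
  obtain ⟨x, hxX, hx⟩ := N.exists_reaches_mem (N.G.edges_sub e he).2
  have h₁ : (N.G.deleteEdge e).Reaches e.2 x :=
    (hx.deleteEdge_or e).resolve_right fun h => N.not_reaches_of_edge he h.1
  have h₂ : (N.G.deleteEdge e).Reaches N.root x :=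
    (hS.reaches x (hS.subset_verts hxX)).mono fun d hd =>
      mem_erase.mpr ⟨fun (h : d = e) => heS (h ▸ hd), hS.subgraph.2 hd⟩
  exact N.exists_isRegion_of_reflTransGen he (h₁.reflTransGen_adj.trans
    ((h₂.reflTransGen_adj.symm_of_symm fun _ _ => Dgraph.adj_symm).trans
      (N.reaches_deleteEdge_root he).reflTransGen_adj))

theorem exists_isRegion_of_isRetic (N : PhyloNet V X) {e : V × V} (he : e ∈ N.G.edges)
    (hret : N.IsRetic e.2) : ∃ B, N.IsRegion B ∧ e ∈ B.edges := by
  obtain ⟨⟨a, b⟩, hd, hde⟩ := exists_mem_ne (by rw [IsRetic, Dgraph.inDeg] at hret; omega :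
    1 < #(N.G.edges.filter (·.2 = e.2))) e
  obtain ⟨hd, rfl : b = e.2⟩ := mem_filter.mp hd
  have h₁ : (N.G.deleteEdge e).adj e.2 a := Or.inr (mem_erase.mpr ⟨hde, hd⟩)
  have h₂ : (N.G.deleteEdge e).Reaches N.root a :=
    ((N.reach _ (N.G.edges_sub _ hd).1).deleteEdge_or e).resolve_right fun h =>
      N.not_reaches_of_edge hd h.2
  exact N.exists_isRegion_of_reflTransGen he ((ReflTransGen.single h₁).trans
    ((h₂.reflTransGen_adj.symm_of_symm fun _ _ => Dgraph.adj_symm).trans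
      (N.reaches_deleteEdge_root he).reflTransGen_adj))

theorem exists_isRegion_of_isRetic_vertex (N : PhyloNet V X) {v : V} (hret : N.IsRetic v) :
    ∃ B, N.IsRegion B ∧ v ∈ B.verts := by
  obtain ⟨u, hu⟩ := Dgraph.exists_edge_of_inDeg_ne_zero (by rw [IsRetic] at hret; omega :
    N.G.inDeg v ≠ 0)
  obtain ⟨B, hB, huB⟩ := N.exists_isRegion_of_isRetic hu hret
  exact ⟨B, hB, (B.edges_sub _ huB).2⟩

theorem IsRegion.mem_edges_of_isRetic {N : PhyloNet V X} {B : Dgraph V} (hB : N.IsRegion B)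
    {v : V} (hv : v ∈ B.verts) (hret : N.IsRetic v) {d : V × V} (hd : d ∈ N.G.edges)
    (hdv : d.2 = v) : d ∈ B.edges := by
  obtain ⟨B', hB', hdB'⟩ := N.exists_isRegion_of_isRetic hd (hdv ▸ hret)
  exact hB'.eq_of_mem hB (hdv ▸ (B'.edges_sub d hdB').2) hv ▸ hdB'

theorem IsSubtree.exists_isRegion_of_notMem_verts {N : PhyloNet V X} {S : Dgraph V}
    (hS : N.IsSubtree S) {v : V} (hv : v ∈ N.G.verts) (hvS : v ∉ S.verts) :
    ∃ B, N.IsRegion B ∧ v ∈ B.verts := by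
  obtain ⟨u, hu⟩ := Dgraph.exists_edge_of_inDeg_ne_zero (by
    rw [N.inDeg_eq hv fun h => hvS (h ▸ hS.root_mem)]; split_ifs <;> omega)
  obtain ⟨B, hB, huB⟩ := hS.exists_isRegion_of_notMem_edges hu
    fun h => hvS (S.edges_sub _ h).2
  exact ⟨B, hB, (B.edges_sub _ huB).2⟩

theorem IsRegion.mem_edges_of_notMem_verts {N : PhyloNet V X} {S : Dgraph V}
    (hS : N.IsSubtree S) {B : Dgraph V} (hB : N.IsRegion B) {v : V} (hv : v ∈ B.verts)
    (hvS : v ∉ S.verts) {d : V × V} (hd : d ∈ N.G.edges) (hdv : d.1 = v ∨ d.2 = v) :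
    d ∈ B.edges := by
  have hdS : d ∉ S.edges := fun h => hvS (by rcases hdv with rfl | rfl <;> simp [S.edges_sub d h])
  obtain ⟨B', hB', hdB'⟩ := hS.exists_isRegion_of_notMem_edges hd hdS
  have hvB' : v ∈ B'.verts := by rcases hdv with rfl | rfl <;> simp [B'.edges_sub d hdB']
  exact hB'.eq_of_mem hB hvB' hv ▸ hdB'

section Entry

variable {N : PhyloNet V X} {B : Dgraph V} {e : V × V}

theorem IsRegion.notMem_edges_of_entry (hB : N.IsRegion B) (he₂ : e.2 ∈ B.verts)
    (he₁ : e.1 ∉ B.verts) {B' : Dgraph V} (hB' : N.IsRegion B') : e ∉ B'.edges := fun heB' =>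
  he₁ (hB'.eq_of_mem hB (B'.edges_sub e heB').2 he₂ ▸ (B'.edges_sub e heB').1)

theorem IsSubtree.mem_edges_of_entry {S : Dgraph V} (hS : N.IsSubtree S) (hB : N.IsRegion B)
    (he : e ∈ N.G.edges) (he₂ : e.2 ∈ B.verts) (he₁ : e.1 ∉ B.verts) : e ∈ S.edges := by
  by_contra heS
  obtain ⟨B', hB', heB'⟩ := hS.exists_isRegion_of_notMem_edges he heS
  exact hB.notMem_edges_of_entry he₂ he₁ hB' heB'

/-- An edge entering a region lies on no cycle, so its head is not a reticulation. -/
theorem IsRegion.eq_of_entry (hB : N.IsRegion B) (he : e ∈ N.G.edges) (he₂ : e.2 ∈ B.verts)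
    (he₁ : e.1 ∉ B.verts) {d : V × V} (hd : d ∈ N.G.edges) (hd₂ : d.2 = e.2) : d = e := by
  have hret : ¬ N.IsRetic e.2 := fun hret => by
    obtain ⟨B', hB', heB'⟩ := N.exists_isRegion_of_isRetic he hret
    exact hB.notMem_edges_of_entry he₂ he₁ hB' heB'
  have hin := N.inDeg_eq (hB.subgraph.1 he₂) fun h => hB.root_notMem (h ▸ he₂)
  rw [if_neg hret] at hin
  exact card_le_one.mp hin.le _ (mem_filter.mpr ⟨hd, hd₂⟩) _ (mem_filter.mpr ⟨he, rfl⟩)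

end Entry

variable {N : PhyloNet V X} {S : Dgraph V}

theorem card_biUnion_regions {α : Type} (N : PhyloNet V X) (g : Dgraph V → Finset α)
    (π : α → V) (hg : ∀ B, ∀ a ∈ g B, π a ∈ B.verts) :
    #(N.regions.biUnion g) = ∑ B ∈ N.regions, #(g B) :=
  card_biUnion fun B hB B' hB' hne => disjoint_left.mpr fun a ha ha' =>
    hne ((mem_regions.mp hB).eq_of_mem (mem_regions.mp hB') (hg B a ha) (hg B' a ha'))

theorem IsSubtree.sum_card_edges_sdiff (hS : N.IsSubtree S) :
    ∑ B ∈ N.regions, #(B.edges \ S.edges) = #(N.G.edges \ S.edges) := by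
  rw [← N.card_biUnion_regions _ Prod.snd fun B d hd => (B.edges_sub d (mem_sdiff.mp hd).1).2]
  congr 1
  ext d
  simp only [mem_biUnion, mem_sdiff, mem_regions]
  constructor
  · rintro ⟨B, hB, hd, hdS⟩
    exact ⟨hB.subgraph.2 hd, hdS⟩
  · rintro ⟨hd, hdS⟩
    obtain ⟨B, hB, hdB⟩ := hS.exists_isRegion_of_notMem_edges hd hdS
    exact ⟨B, hB, hdB, hdS⟩

theorem IsSubtree.sum_card_verts_sdiff (hS : N.IsSubtree S) :
    ∑ B ∈ N.regions, #(B.verts \ S.verts) = #(N.G.verts \ S.verts) := by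
  rw [← N.card_biUnion_regions _ id fun B v hv => (mem_sdiff.mp hv).1]
  congr 1
  ext v
  simp only [mem_biUnion, mem_sdiff, mem_regions]
  constructor
  · rintro ⟨B, hB, hv, hvS⟩
    exact ⟨hB.subgraph.1 hv, hvS⟩
  · rintro ⟨hv, hvS⟩
    obtain ⟨B, hB, hvB⟩ := hS.exists_isRegion_of_notMem_verts hv hvS
    exact ⟨B, hB, hvB, hvS⟩

theorem sum_card_retics (N : PhyloNet V X) :
    ∑ B ∈ N.regions, #(B.verts.filter N.IsRetic) = N.numRetic := by
  rw [← N.card_biUnion_regions _ id fun B v hv => (mem_filter.mp hv).1, numRetic]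
  congr 1
  ext v
  simp only [mem_biUnion, mem_filter, mem_regions]
  constructor
  · rintro ⟨B, hB, hv, hret⟩
    exact ⟨hB.subgraph.1 hv, hret⟩
  · rintro ⟨-, hret⟩
    obtain ⟨B, hB, hvB⟩ := N.exists_isRegion_of_isRetic_vertex hret
    exact ⟨B, hB, hvB, hret⟩

/-- Counting edges of `B` outside `S` by their heads: a vertex outside `S` has all its in-edges
outside `S`, and a reticulation has at most one of its two in-edges in `S`. -/
theorem IsSubtree.card_verts_sdiff_add_le (hS : N.IsSubtree S) {B : Dgraph V}
    (hB : N.IsRegion B) :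
    #(B.verts \ S.verts) + #(B.verts.filter N.IsRetic) ≤ #(B.edges \ S.edges) := by
  rw [card_eq_sum_card_fiberwise fun d hd => (B.edges_sub d (mem_sdiff.mp hd).1).2,
    sdiff_eq_filter, card_filter, card_filter, ← sum_add_distrib]
  refine sum_le_sum fun v hv => ?_
  by_cases hquota : v ∈ S.verts ∧ ¬ N.IsRetic v
  · simp [hquota]
  have hin : N.G.edges.filter (·.2 = v) ⊆ B.edges := fun d hd => by
    obtain ⟨hdN, rfl⟩ := mem_filter.mp hd
    by_cases hvS : d.2 ∈ S.verts
    · exact hB.mem_edges_of_isRetic hv (not_and_not_right.mp hquota hvS) hdN rfl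
    · exact hB.mem_edges_of_notMem_verts hS hv hvS hdN (Or.inr rfl)
  have hsub : N.G.edges.filter (·.2 = v) \ S.edges.filter (·.2 = v) ⊆
      (B.edges \ S.edges).filter (·.2 = v) := fun d hd => by
    obtain ⟨hdN, hdS⟩ := mem_sdiff.mp hd
    obtain ⟨-, hdv⟩ := mem_filter.mp hdN
    exact mem_filter.mpr ⟨mem_sdiff.mpr ⟨hin hdN, fun h => hdS (mem_filter.mpr ⟨h, hdv⟩)⟩, hdv⟩
  refine le_trans ?_ ((le_card_sdiff _ _).trans (card_le_card hsub))
  have hNin := N.inDeg_eq (hB.subgraph.1 hv) fun h => hB.root_notMem (h ▸ hv)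
  have hSin := hS.inDeg_le_one v
  simp only [Dgraph.inDeg] at hNin hSin
  by_cases hvS : v ∈ S.verts
  · split_ifs at hNin ⊢ <;> omega
  · have := Dgraph.inDeg_eq_zero_of_notMem hvS
    simp only [Dgraph.inDeg] at this
    split_ifs at hNin ⊢ <;> omega

/-- The region-wise inequalities `card_verts_sdiff_add_le` add up to the equality
`|E(N) \ E(S)| = |V(N) \ V(S)| + h(N)`, so each of them is an equality. -/
theorem IsSubtree.card_edges_sdiff_eq (hS : N.IsSubtree S) {B : Dgraph V} (hB : N.IsRegion B) :
    #(B.edges \ S.edges) = #(B.verts \ S.verts) + #(B.verts.filter N.IsRetic) := by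
  have hsum : ∑ B ∈ N.regions, (#(B.verts \ S.verts) + #(B.verts.filter N.IsRetic)) =
      ∑ B ∈ N.regions, #(B.edges \ S.edges) := by
    rw [sum_add_distrib, hS.sum_card_verts_sdiff, N.sum_card_retics, hS.sum_card_edges_sdiff,
      card_sdiff_of_subset hS.subgraph.2, card_sdiff_of_subset hS.subgraph.1]
    have := N.card_edges_add_one
    have := hS.card_verts
    have := card_le_card hS.subgraph.1
    omega
  exact ((sum_eq_sum_iff_of_le fun B hB => hS.card_verts_sdiff_add_le (mem_regions.mp hB)).mp
    hsum B (mem_regions.mpr hB)).symm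

end PhyloNet

/-! ### Extending a labelling of the tree to the network -/

theorem Relation.ReflTransGen.eq_of_no_pred {α : Type} {r : α → α → Prop}
    (hr : ∀ {a b c}, r a c → r b c → a = b) {s₁ s₂ x : α} (h₁ : ReflTransGen r s₁ x)
    (h₂ : ReflTransGen r s₂ x) (hs₁ : ∀ a, ¬ r a s₁) (hs₂ : ∀ a, ¬ r a s₂) : s₁ = s₂ := by
  induction h₁ generalizing s₂ with
  | refl =>
    rcases h₂.cases_tail with rfl | ⟨c, -, hc⟩
    · rfl
    · exact absurd hc (hs₁ c)
  | @tail b x _ hbx ih =>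
    rcases h₂.cases_tail with rfl | ⟨c, hc, hcx⟩
    · exact absurd hbx (hs₂ b)
    · exact ih (hr hcx hbx ▸ hc) hs₂

theorem ch_mono {V C : Type} (F : V → C) {G H : Dgraph V} (h : G.edges ⊆ H.edges) :
    ch F G ≤ ch F H :=
  card_le_card (filter_subset_filter _ h)

theorem PS_le_ch {V C : Type} {X : Finset V} {f F : V → C} (G : Dgraph V)
    (hF : IsExtension X f F) : PS X f G ≤ ch F G :=
  Nat.sInf_le ⟨F, hF, rfl⟩

theorem exists_realises {V C : Type} {X : Finset V} (N : PhyloNet V X) (f : V → C)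
    (S : Dgraph V) : ∃ F, Realises N f S F := by
  obtain ⟨F₀, hF₀, hch⟩ := Nat.sInf_mem (s := {n | ∃ F, IsExtension X f F ∧ ch F S = n})
    ⟨_, f, fun _ _ => rfl, rfl⟩
  exact Nat.sInf_mem (s := {m | ∃ F, IsExtension X f F ∧ ch F S = PS X f S ∧ infBlobCount N F = m})
    ⟨_, F₀, hF₀, hch, rfl⟩

namespace PhyloNet

variable {V C : Type} {X : Finset V} {N : PhyloNet V X} {S : Dgraph V}

def someChild (N : PhyloNet V X) (v : V) : V :=
  if h : ∃ w, (v, w) ∈ N.G.edges then h.choose else v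

theorem someChild_mem (N : PhyloNet V X) {v : V} (h : ∃ w, (v, w) ∈ N.G.edges) :
    (v, N.someChild v) ∈ N.G.edges := by
  rw [someChild, dif_pos h]; exact h.choose_spec

def someBlobChild (N : PhyloNet V X) (B : Dgraph V) : V :=
  if h : (N.blobChildren B).Nonempty then h.choose else N.root

theorem IsRegion.someBlobChild_mem {B : Dgraph V} (hB : N.IsRegion B) :
    N.someBlobChild B ∈ N.blobChildren B := by
  rw [someBlobChild, dif_pos hB.blobChildren_nonempty]; exact hB.blobChildren_nonempty.choose_spec

/-- `v` lies in a region `B` with `ind(F,B,S) = 0`. -/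
def InQuietRegion (N : PhyloNet V X) (F : V → C) (v : V) : Prop :=
  ∃ B, N.IsRegion B ∧ SameOnChildren N B F ∧ v ∈ B.verts

/-- Outside `S` and outside quiet regions a vertex takes the state of the first vertex of `S`
reached by iterating `someChild`, so no edge `(v, someChild v)` with `v ∉ S` changes state. -/
def recolor (N : PhyloNet V X) (S : Dgraph V) (F : V → C) (v : V) : C :=
  if h : N.InQuietRegion F v then F (N.someBlobChild h.choose)
  else if v ∈ S.verts then F v
  else if _ : ∃ w, (v, w) ∈ N.G.edges then N.recolor S F (N.someChild v)
  else F v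
termination_by N.numDesc v
decreasing_by exact N.numDesc_lt (N.someChild_mem ‹_›)

theorem recolor_of_isRegion {F : V → C} {B : Dgraph V} (hB : N.IsRegion B)
    (hq : SameOnChildren N B F) {v : V} (hv : v ∈ B.verts) :
    N.recolor S F v = F (N.someBlobChild B) := by
  have h : N.InQuietRegion F v := ⟨B, hB, hq, hv⟩
  rw [recolor, dif_pos h, h.choose_spec.1.eq_of_mem hB h.choose_spec.2.2 hv]

theorem recolor_of_mem {F : V → C} {v : V} (hq : ¬ N.InQuietRegion F v) (hv : v ∈ S.verts) :
    N.recolor S F v = F v := by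
  rw [recolor, dif_neg hq, if_pos hv]

theorem recolor_someChild {F : V → C} {v : V} (hq : ¬ N.InQuietRegion F v) (hv : v ∉ S.verts)
    (h : ∃ w, (v, w) ∈ N.G.edges) : N.recolor S F v = N.recolor S F (N.someChild v) := by
  rw [recolor, dif_neg hq, if_neg hv, dif_pos h]

def mismatchedEntries (N : PhyloNet V X) (F : V → C) : Finset (V × V) :=
  N.G.edges.filter fun e => ∃ B, N.IsRegion B ∧ SameOnChildren N B F ∧ e.2 ∈ B.verts ∧
    e.1 ∉ B.verts ∧ F e.2 ≠ F (N.someBlobChild B)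

def surplusEdges (N : PhyloNet V X) (S : Dgraph V) (F : V → C) : Finset (V × V) :=
  N.G.edges.filter fun e => e ∉ S.edges ∧
    (∃ B, N.IsRegion B ∧ ¬ SameOnChildren N B F ∧ e ∈ B.edges) ∧
    ¬ (e.1 ∉ S.verts ∧ e.2 = N.someChild e.1)

theorem recolor_eq_of_mem_edges {F : V → C} {e : V × V} (he : e ∈ S.edges)
    (heN : e ∈ N.G.edges) (hA : N.InQuietRegion F e.1 ∨ F e.1 = F e.2)
    (hD : e ∉ N.mismatchedEntries F) : N.recolor S F e.1 = N.recolor S F e.2 := by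
  have h₂S := (S.edges_sub e he).2
  have hhead : N.recolor S F e.2 = F e.2 ∨
      ∃ B, N.IsRegion B ∧ SameOnChildren N B F ∧ e.1 ∈ B.verts ∧ e.2 ∈ B.verts := by
    by_cases hq₂ : N.InQuietRegion F e.2
    · obtain ⟨B, hB, hq, h₂B⟩ := hq₂
      by_cases h₁B : e.1 ∈ B.verts
      · exact Or.inr ⟨B, hB, hq, h₁B, h₂B⟩
      · have : F e.2 = F (N.someBlobChild B) := by
          by_contra hne; exact hD (mem_filter.mpr ⟨heN, B, hB, hq, h₂B, h₁B, hne⟩)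
        exact Or.inl ((recolor_of_isRegion hB hq h₂B).trans this.symm)
    · exact Or.inl (recolor_of_mem hq₂ h₂S)
  by_cases hq₁ : N.InQuietRegion F e.1
  · obtain ⟨B, hB, hq, h₁B⟩ := hq₁
    rw [recolor_of_isRegion hB hq h₁B]
    rcases hhead with h | ⟨B', hB', -, h₁B', h₂B'⟩
    · by_cases h₂B : e.2 ∈ B.verts
      · exact (recolor_of_isRegion hB hq h₂B).symm
      · rw [h]
        exact hq _ hB.someBlobChild_mem _
          (mem_filter.mpr ⟨(N.G.edges_sub e heN).2, h₂B, _, h₁B, heN⟩)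
    · exact (recolor_of_isRegion hB hq (hB'.eq_of_mem hB h₁B' h₁B ▸ h₂B')).symm
  · rw [recolor_of_mem hq₁ (S.edges_sub e he).1, hA.resolve_left hq₁]
    rcases hhead with h | ⟨B, hB, hq, h₁B, -⟩
    · exact h.symm
    · exact absurd ⟨B, hB, hq, h₁B⟩ hq₁

theorem IsSubtree.recolor_eq_of_notMem_edges (hS : N.IsSubtree S) {F : V → C} {e : V × V}
    (he : e ∈ N.G.edges) (heS : e ∉ S.edges) (hSl : e ∉ N.surplusEdges S F) :
    N.recolor S F e.1 = N.recolor S F e.2 := by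
  obtain ⟨B, hB, heB⟩ := hS.exists_isRegion_of_notMem_edges he heS
  have h₁B := (B.edges_sub e heB).1
  have h₂B := (B.edges_sub e heB).2
  by_cases hq : SameOnChildren N B F
  · rw [recolor_of_isRegion hB hq h₁B, recolor_of_isRegion hB hq h₂B]
  have hnq : ∀ v ∈ B.verts, ¬ N.InQuietRegion F v := fun v hv ⟨B', hB', hq', hvB'⟩ =>
    hq (hB'.eq_of_mem hB hvB' hv ▸ hq')
  have hchild : e.1 ∉ S.verts ∧ e.2 = N.someChild e.1 := by
    by_contra h; exact hSl (mem_filter.mpr ⟨he, heS, ⟨B, hB, hq, heB⟩, h⟩)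
  rw [recolor_someChild (hnq _ h₁B) hchild.1 ⟨_, he⟩, ← hchild.2]

/-- Walking down `S` from `s` inside `B` one leaves `B` at a child of `B`, and all children of
`B` have a state different from `F s`. -/
theorem IsSubtree.exists_change (hS : N.IsSubtree S) {F : V → C} {B : Dgraph V}
    (hB : N.IsRegion B) (hq : SameOnChildren N B F) {s : V} (hsB : s ∈ B.verts)
    (hsS : s ∈ S.verts) (hs : F s ≠ F (N.someBlobChild B)) :
    ∃ x y, ReflTransGen (fun a b => (a, b) ∈ S.edges ∧ a ∈ B.verts) s x ∧
      (x, y) ∈ S.edges ∧ x ∈ B.verts ∧ F x ≠ F y := by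
  induction hn : N.numDesc s using Nat.strong_induction_on generalizing s with
  | _ n ih =>
    obtain ⟨w, hw⟩ := hS.exists_edge hsS fun hsX => hB.notMem_of_mem hsX hsB
    by_cases hsw : F s = F w
    · by_cases hwB : w ∈ B.verts
      · obtain ⟨x, y, hx, hxy⟩ := ih _ (hn ▸ N.numDesc_lt (hS.subgraph.2 hw)) hwB
          (S.edges_sub _ hw).2 (hsw ▸ hs) rfl
        exact ⟨x, y, ReflTransGen.head ⟨hw, hsB⟩ hx, hxy⟩
      · refine absurd (hsw.trans (hq w ?_ _ hB.someBlobChild_mem)) hs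
        exact mem_filter.mpr ⟨hS.subgraph.1 (S.edges_sub _ hw).2, hwB, s, hsB, hS.subgraph.2 hw⟩
    · exact ⟨s, w, .refl, hw, hsB, hsw⟩

theorem IsSubtree.card_mismatchedEntries_le (hS : N.IsSubtree S) (F : V → C) :
    #(N.mismatchedEntries F) ≤
      #(S.edges.filter fun e => N.InQuietRegion F e.1 ∧ F e.1 ≠ F e.2) := by
  have key : ∀ d ∈ N.mismatchedEntries F, ∃ xy : V × V,
      xy ∈ S.edges.filter (fun e => N.InQuietRegion F e.1 ∧ F e.1 ≠ F e.2) ∧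
      ∃ B, N.IsRegion B ∧ d.2 ∈ B.verts ∧ d.1 ∉ B.verts ∧ xy.1 ∈ B.verts ∧
        ReflTransGen (fun a b => (a, b) ∈ S.edges ∧ a ∈ B.verts) d.2 xy.1 := by
    intro d hd
    obtain ⟨hdN, B, hB, hq, h₂B, h₁B, hne⟩ := mem_filter.mp hd
    have hdS := hS.mem_edges_of_entry hB hdN h₂B h₁B
    obtain ⟨x, y, hx, hxy, hxB, hF⟩ :=
      hS.exists_change hB hq h₂B (S.edges_sub _ hdS).2 hne
    exact ⟨(x, y), mem_filter.mpr ⟨hxy, ⟨B, hB, hq, hxB⟩, hF⟩, B, hB, h₂B, h₁B, hxB, hx⟩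
  choose! φ hφ hφB using key
  refine card_le_card_of_injOn φ (fun d hd => hφ d hd) fun d hd d' hd' hdd' => ?_
  obtain ⟨B, hB, h₂B, h₁B, hxB, hx⟩ := hφB d hd
  obtain ⟨B', hB', h₂B', h₁B', hxB', hx'⟩ := hφB d' hd'
  rw [← hdd'] at hxB' hx'
  obtain rfl := hB'.eq_of_mem hB hxB' hxB
  have hdN := (mem_filter.mp hd).1
  have hdN' := (mem_filter.mp hd').1
  have hroot : ∀ {d : V × V}, d ∈ N.G.edges → d.2 ∈ B'.verts → d.1 ∉ B'.verts →
      ∀ a, ¬ ((a, d.2) ∈ S.edges ∧ a ∈ B'.verts) := fun hdN h₂ h₁ a ⟨ha, haB⟩ =>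
    h₁ (congrArg Prod.fst (hB'.eq_of_entry hdN h₂ h₁ (hS.subgraph.2 ha) rfl) ▸ haB)
  have h₂ : d.2 = d'.2 := hx.eq_of_no_pred
    (fun hac hbc => hS.eq_of_mem_edges hac.1 hbc.1) hx'
    (hroot hdN h₂B h₁B) (hroot hdN' h₂B' h₁B')
  exact hB'.eq_of_entry hdN' h₂B' h₁B' hdN h₂

theorem IsSubtree.image_someChild_subset (hS : N.IsSubtree S) {B : Dgraph V}
    (hB : N.IsRegion B) :
    (B.verts \ S.verts).image (fun v => (v, N.someChild v)) ⊆ B.edges \ S.edges := by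
  intro d hd
  obtain ⟨v, hv, rfl⟩ := mem_image.mp hd
  obtain ⟨hvB, hvS⟩ := mem_sdiff.mp hv
  have hvd := N.someChild_mem (N.exists_edge_of_notMem (hB.subgraph.1 hvB)
    fun hvX => hB.notMem_of_mem hvX hvB)
  exact mem_sdiff.mpr ⟨hB.mem_edges_of_notMem_verts hS hvB hvS hvd (Or.inl rfl),
    fun h => hvS (S.edges_sub _ h).1⟩

theorem IsSubtree.card_surplusEdges_le (hS : N.IsSubtree S) {k : ℕ} (hlev : N.IsLevel k)
    (F : V → C) :
    #(N.surplusEdges S F) ≤ k * #(N.regions.filter fun B => ¬ SameOnChildren N B F) := by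
  set I := N.regions.filter fun B => ¬ SameOnChildren N B F
  have hsub : N.surplusEdges S F ⊆ I.biUnion fun B =>
      (B.edges \ S.edges) \ (B.verts \ S.verts).image (fun v => (v, N.someChild v)) := by
    intro e he
    obtain ⟨-, heS, ⟨B, hB, hq, heB⟩, hchild⟩ := mem_filter.mp he
    refine mem_biUnion.mpr ⟨B, mem_filter.mpr ⟨mem_regions.mpr hB, hq⟩,
      mem_sdiff.mpr ⟨mem_sdiff.mpr ⟨heB, heS⟩, fun h => hchild ?_⟩⟩
    obtain ⟨v, hv, rfl⟩ := mem_image.mp h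
    exact ⟨(mem_sdiff.mp hv).2, rfl⟩
  refine (card_le_card hsub).trans (card_biUnion_le.trans ?_)
  rw [mul_comm, ← smul_eq_mul]
  refine sum_le_card_nsmul _ _ _ fun B hBI => ?_
  have hB := mem_regions.mp (mem_filter.mp hBI).1
  rw [card_sdiff_of_subset (hS.image_someChild_subset hB),
    card_image_of_injective _ fun v w h => congrArg Prod.fst h, hS.card_edges_sdiff_eq hB]
  have : #(B.verts.filter N.IsRetic) ≤ k := hlev B hB.1
  omega

theorem IsSubtree.ch_recolor_le (hS : N.IsSubtree S) {k : ℕ} (hlev : N.IsLevel k) (F : V → C) :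
    ch (N.recolor S F) N.G ≤ ch F S + k * #(N.regions.filter fun B => ¬ SameOnChildren N B F) := by
  set A := S.edges.filter fun e => ¬ N.InQuietRegion F e.1 ∧ F e.1 ≠ F e.2
  have hsub : N.G.edges.filter (fun e => N.recolor S F e.1 ≠ N.recolor S F e.2) ⊆
      A ∪ N.mismatchedEntries F ∪ N.surplusEdges S F := by
    intro e he
    obtain ⟨heN, hne⟩ := mem_filter.mp he
    by_contra hmem
    simp only [mem_union, not_or] at hmem
    obtain ⟨⟨hA, hD⟩, hSl⟩ := hmem
    by_cases heS : e ∈ S.edges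
    · refine hne (recolor_eq_of_mem_edges heS heN ?_ hD)
      by_contra h
      exact hA (mem_filter.mpr ⟨heS, not_or.mp h |>.1, not_or.mp h |>.2⟩)
    · exact hne (hS.recolor_eq_of_notMem_edges heN heS hSl)
  have hsplit : #A + #(S.edges.filter fun e => N.InQuietRegion F e.1 ∧ F e.1 ≠ F e.2) =
      ch F S := by
    rw [ch, ← card_filter_add_card_filter_not (s := S.edges.filter fun e => F e.1 ≠ F e.2)
      (fun e => ¬ N.InQuietRegion F e.1), filter_filter, filter_filter]
    simp only [A, not_not, and_comm]
  have := card_le_card hsub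
  have := card_union_le (A ∪ N.mismatchedEntries F) (N.surplusEdges S F)
  have := card_union_le A (N.mismatchedEntries F)
  have := hS.card_mismatchedEntries_le F
  have := hS.card_surplusEdges_le hlev F
  rw [ch]
  omega

theorem card_filter_regions_le_infBlobCount (N : PhyloNet V X) (F : V → C) :
    #(N.regions.filter fun B => ¬ SameOnChildren N B F) ≤ infBlobCount N F := by
  rw [infBlobCount, ← Set.ncard_coe_finset]
  refine Set.ncard_le_ncard (fun B hB => ?_)
    (N.G.finite_setOf_isSubgraph.subset fun B hB => hB.1.1.1)
  obtain ⟨hB, hq⟩ := mem_filter.mp hB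
  exact ⟨⟨(mem_regions.mp hB).1, (mem_regions.mp hB).exists_isRetic⟩, hq⟩

end PhyloNet

theorem cor_PS_bound_general {V C : Type} {X : Finset V}
    (N : PhyloNet V X) (k : ℕ) (hlev : N.IsLevel k)
    (f : V → C)
    (T T' : PhyloNet V X) (hT' : T'.IsTreeNet)
    (S S' : Dgraph V) (hS : N.IsEmbedding T S) (hS' : N.IsEmbedding T' S') :
    PS X f S ≤ PS X f S' + k * blobScore N f S' := by
  obtain ⟨F, hFext, hFch, hFblob⟩ := exists_realises N f S'
  have hsub := hS'.isSubtree hT'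
  have hext : IsExtension X f (N.recolor S' F) := fun x hx => by
    have hq : ¬ N.InQuietRegion F x := fun ⟨B, hB, _, hxB⟩ => hB.notMem_of_mem hx hxB
    rw [PhyloNet.recolor_of_mem hq (hsub.subset_verts hx), hFext x hx]
  calc PS X f S ≤ ch (N.recolor S' F) S := PS_le_ch S hext
    _ ≤ ch (N.recolor S' F) N.G := ch_mono _ hS.1.2
    _ ≤ ch F S' + k * #(N.regions.filter fun B => ¬ SameOnChildren N B F) :=
      hsub.ch_recolor_le hlev F
    _ ≤ PS X f S' + k * blobScore N f S' := by
      rw [hFch, ← hFblob]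
      gcongr
      exact N.card_filter_regions_le_infBlobCount F

/-- **Corollary.** Let `f` be a character on `X`, let `N` be a rooted binary level-`k`
phylogenetic network on `X`, and let `S`, `S'` be embeddings of two phylogenetic `X`-trees
displayed by `N` with `PS_sw(f,N) = PS(f,S')`. Then
`PS(f,S) ≤ PS(f,S') + k·b(f,N,S')`. -/
theorem cor_PS_bound {V C : Type} {X : Finset V}
    (N : PhyloNet V X) (k : ℕ) (hlev : N.IsLevel k)
    (f : V → C) (hf : IsCharacter X f)
    (T T' : PhyloNet V X) (hT : T.IsTreeNet) (hT' : T'.IsTreeNet)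
    (S S' : Dgraph V) (hS : N.IsEmbedding T S) (hS' : N.IsEmbedding T' S')
    (hsw : PSsw N f = PS X f S') :
    PS X f S ≤ PS X f S' + k * blobScore N f S' :=
  cor_PS_bound_general N k hlev f T T' hT' S S' hS hS'

end
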